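/- arXiv:1105.2807 — 4 statements merged into one kernel-verified Lean document; each statement's English description precedes it below -/
import Mathlib

section
/- The integral ∫_{(ℝ∖{0})²} 1 / ( max{1, |y₁|, |y₂|, |y₁y₂|^{−1}} · |y₁y₂| ) dy₁ dy₂ equals 36, where dy₁ dy₂ is Lebesgue measure on ℝ². -/
/-!
The integrand depends only on `|y₁|` and `|y₂|`, so the integral is four times the one over the
open positive quadrant, where `(max {1, a, b, (ab)⁻¹} · ab)⁻¹ = 1 / max {ab, a²b, ab², 1}`.
For fixed `a > 0` the `b`-integral is elementary on the pieces where one monomial dominates: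
it is `2 / √a` for `a ≤ 1` and `(2 + 3 log a) / a²` for `a ≥ 1`. Integrating over `(0, 1]` and
`(1, ∞)` gives `4 + 5 = 9`.
-/

open MeasureTheory Set Real

theorem lintegral_ofReal_const_mul {α : Type*} [MeasurableSpace α] {μ : Measure α} {k : ℝ}
    (hk : 0 ≤ k) (f : α → ℝ) :
    ∫⁻ x, ENNReal.ofReal (k * f x) ∂μ
      = ENNReal.ofReal k * ∫⁻ x, ENNReal.ofReal (f x) ∂μ := by
  simp_rw [ENNReal.ofReal_mul hk]
  exact lintegral_const_mul' _ _ ENNReal.ofReal_ne_top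

theorem lintegral_comp_abs (F : ℝ → ENNReal) :
    ∫⁻ x, F |x| = 2 * ∫⁻ x in Ioi 0, F x := by
  have h_neg : (volume.restrict (Ici (0:ℝ))).map Neg.neg = volume.restrict (Iic 0) := by
    conv => rhs; rw [← Measure.map_neg_eq_self volume, measurableEmbedding_neg.restrict_map]
    simp
  have h_Iic : ∫⁻ x in Iic 0, F |x| = ∫⁻ x in Ioi 0, F x := by
    rw [← h_neg, measurableEmbedding_neg.lintegral_map, ← restrict_Ioi_eq_restrict_Ici]
    exact setLIntegral_congr_fun measurableSet_Ioi fun x hx => by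
      rw [abs_neg, abs_of_pos hx]
  have h_Ioi : ∫⁻ x in Ioi 0, F |x| = ∫⁻ x in Ioi 0, F x :=
    setLIntegral_congr_fun measurableSet_Ioi fun x hx => by rw [abs_of_pos hx]
  rw [← lintegral_add_compl _ measurableSet_Ioi, compl_Ioi, h_Ioi, h_Iic, two_mul]

theorem lintegral_Ioi_inv_sq {r : ℝ} (hr : 0 < r) :
    ∫⁻ t in Ioi r, ENNReal.ofReal (t ^ 2)⁻¹ = ENNReal.ofReal r⁻¹ := by
  have h_rpow : EqOn (fun t : ℝ => t ^ (-2 : ℝ)) (fun t => (t ^ 2)⁻¹) (Ioi r) := by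
    intro t ht
    dsimp only
    rw [rpow_neg (hr.trans ht).le, rpow_ofNat]
  rw [← ofReal_integral_eq_lintegral_ofReal
      ((integrableOn_Ioi_rpow_of_lt (by norm_num) hr).congr_fun h_rpow measurableSet_Ioi)
      (ae_restrict_of_forall_mem measurableSet_Ioi fun t _ => by positivity),
    ← setIntegral_congr_fun measurableSet_Ioi h_rpow, integral_Ioi_rpow_of_lt (by norm_num) hr]
  norm_num [rpow_neg_one]

theorem lintegral_Ioc_inv {a b : ℝ} (ha : 0 < a) (hab : a ≤ b) :
    ∫⁻ t in Ioc a b, ENNReal.ofReal t⁻¹ = ENNReal.ofReal (log (b / a)) := by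
  have h_int : IntegrableOn (fun t : ℝ => t⁻¹) (Ioc a b) :=
    ((continuousOn_inv₀.mono fun t ht => (ha.trans_le ht.1).ne').integrableOn_Icc).mono_set
      Ioc_subset_Icc_self
  rw [← ofReal_integral_eq_lintegral_ofReal h_int
      (ae_restrict_of_forall_mem measurableSet_Ioc fun t ht => (inv_pos.2 (ha.trans ht.1)).le),
    ← intervalIntegral.integral_of_le hab, integral_inv]
  rw [uIcc_of_le hab]
  exact fun h => (ha.trans_le h.1).ne' rfl

theorem lintegral_Ioc_inv_sqrt :
    ∫⁻ t in Ioc 0 1, ENNReal.ofReal (√t)⁻¹ = 2 := by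
  have h_rpow : EqOn (fun t : ℝ => t ^ (-(1 / 2) : ℝ)) (fun t => (√t)⁻¹) (Ioc 0 1) := by
    intro t ht
    dsimp only
    rw [rpow_neg ht.1.le, sqrt_eq_rpow]
  have h_int : IntegrableOn (fun t : ℝ => t ^ (-(1 / 2) : ℝ)) (Ioc 0 1) := by
    rw [← intervalIntegrable_iff_integrableOn_Ioc_of_le zero_le_one]
    exact intervalIntegral.intervalIntegrable_rpow' (by norm_num)
  rw [← ofReal_integral_eq_lintegral_ofReal (h_int.congr_fun h_rpow measurableSet_Ioc)
      (ae_restrict_of_forall_mem measurableSet_Ioc fun t _ => by positivity),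
    ← setIntegral_congr_fun measurableSet_Ioc h_rpow,
    ← intervalIntegral.integral_of_le zero_le_one, integral_rpow (Or.inl (by norm_num))]
  norm_num

theorem hasDerivAt_neg_log_add_one_div {x : ℝ} (hx : 0 < x) :
    HasDerivAt (fun t => -(log t + 1) / t) (log x / x ^ 2) x := by
  refine ((((hasDerivAt_log hx.ne').add_const 1).neg).div (hasDerivAt_id x) hx.ne').congr_deriv
    ?_
  simp only [id, Pi.neg_apply]
  field_simp
  ring

theorem tendsto_neg_log_add_one_div_atTop :
    Filter.Tendsto (fun t => -(log t + 1) / t) Filter.atTop (nhds 0) := by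
  have h :=
    ((tendsto_pow_log_div_mul_add_atTop 1 0 1 one_ne_zero).neg).sub tendsto_inv_atTop_zero
  simp only [pow_one, one_mul, add_zero, neg_zero, sub_zero] at h
  refine h.congr' ?_
  filter_upwards [Filter.eventually_gt_atTop 0] with t ht
  field_simp
  ring

theorem lintegral_Ioi_log_div_sq :
    ∫⁻ t in Ioi 1, ENNReal.ofReal (log t / t ^ 2) = 1 := by
  have h_deriv : ∀ x ∈ Ici (1 : ℝ), HasDerivAt (fun t => -(log t + 1) / t) (log x / x ^ 2) x :=
    fun x hx => hasDerivAt_neg_log_add_one_div (one_pos.trans_le hx)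
  have h_nonneg : ∀ x ∈ Ioi (1 : ℝ), 0 ≤ log x / x ^ 2 :=
    fun x hx => div_nonneg (log_nonneg (le_of_lt hx)) (sq_nonneg x)
  rw [← ofReal_integral_eq_lintegral_ofReal
      (integrableOn_Ioi_deriv_of_nonneg' h_deriv h_nonneg tendsto_neg_log_add_one_div_atTop)
      (ae_restrict_of_forall_mem measurableSet_Ioi h_nonneg),
    integral_Ioi_of_hasDerivAt_of_nonneg' h_deriv h_nonneg tendsto_neg_log_add_one_div_atTop]
  simp

noncomputable def quadrantDensity (a b : ℝ) : ℝ :=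
  (max (max (a * b) (a ^ 2 * b)) (max (a * b ^ 2) 1))⁻¹

theorem inv_max_mul_eq_quadrantDensity {a b : ℝ} (ha : 0 < a) (hb : 0 < b) :
    (max (max 1 a) (max b (a * b)⁻¹) * (a * b))⁻¹ = quadrantDensity a b := by
  have hab : 0 < a * b := mul_pos ha hb
  rw [quadrantDensity, max_mul_of_nonneg _ _ hab.le, max_mul_of_nonneg _ _ hab.le,
    max_mul_of_nonneg _ _ hab.le, inv_mul_cancel₀ hab.ne', one_mul]
  ring_nf

theorem quadrantDensity_comm (a b : ℝ) : quadrantDensity a b = quadrantDensity b a := by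
  rw [quadrantDensity, quadrantDensity, mul_comm b a, mul_comm (b ^ 2) a, mul_comm b (a ^ 2),
    max_max_max_comm]

theorem quadrantDensity_eq_one {a b : ℝ} (h₁ : a * b ≤ 1) (h₂ : a ^ 2 * b ≤ 1)
    (h₃ : a * b ^ 2 ≤ 1) : quadrantDensity a b = 1 := by
  rw [quadrantDensity, max_eq_right h₃, max_eq_right (max_le h₁ h₂), inv_one]

theorem quadrantDensity_eq_of_le_right {a b : ℝ} (hb : 1 ≤ b) (hab : a ≤ b)
    (h : 1 ≤ a * b ^ 2) : quadrantDensity a b = (a * b ^ 2)⁻¹ := by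
  have h₁ : a * b ≤ a * b ^ 2 := by nlinarith
  have h₂ : a ^ 2 * b ≤ a * b ^ 2 := by nlinarith
  rw [quadrantDensity, max_eq_left h, max_eq_right (max_le h₁ h₂)]

theorem quadrantDensity_eq_of_le_left {a b : ℝ} (ha : 1 ≤ a) (hab : b ≤ a)
    (h : 1 ≤ a ^ 2 * b) : quadrantDensity a b = (a ^ 2 * b)⁻¹ := by
  rw [quadrantDensity_comm, quadrantDensity_eq_of_le_right ha hab (by linarith), mul_comm]

theorem lintegral_quadrantDensity_of_le_one {c : ℝ} (hc₀ : 0 < c) (hc₁ : c ≤ 1) :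
    ∫⁻ t in Ioi 0, ENNReal.ofReal (quadrantDensity c t) = ENNReal.ofReal (2 / √c) := by
  set r := (√c)⁻¹ with hr
  have hs : 0 < √c := sqrt_pos.2 hc₀
  have hs₁ : √c ≤ 1 := sqrt_le_one.2 hc₁
  have hr₀ : 0 < r := inv_pos.2 hs
  have hr₁ : 1 ≤ r := one_le_inv₀ hs |>.2 hs₁
  have hcr : c * r ^ 2 = 1 := by rw [hr, inv_pow, sq_sqrt hc₀.le, mul_inv_cancel₀ hc₀.ne']
  have h_low : ∀ t ∈ Ioc 0 r, ENNReal.ofReal (quadrantDensity c t) = 1 := fun t ht => by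
    have hct : c * t ≤ c * r := mul_le_mul_of_nonneg_left ht.2 hc₀.le
    have hctt : c * t ^ 2 ≤ 1 :=
      hcr ▸ mul_le_mul_of_nonneg_left (pow_le_pow_left₀ ht.1.le ht.2 2) hc₀.le
    rw [quadrantDensity_eq_one (by nlinarith) (by nlinarith) (by linarith), ENNReal.ofReal_one]
  have h_high : ∀ t ∈ Ioi r, ENNReal.ofReal (quadrantDensity c t)
      = ENNReal.ofReal (c⁻¹ * (t ^ 2)⁻¹) := fun t ht => by
    have hrt : r ^ 2 ≤ t ^ 2 := pow_le_pow_left₀ hr₀.le ht.le 2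
    rw [quadrantDensity_eq_of_le_right (hr₁.trans ht.le) (by linarith [ht.out])
      (hcr ▸ mul_le_mul_of_nonneg_left hrt hc₀.le), mul_inv]
  have h_tail : c⁻¹ * r⁻¹ = r := by
    field_simp
    exact hcr.symm
  rw [← Ioc_union_Ioi_eq_Ioi hr₀.le, lintegral_union measurableSet_Ioi (Ioc_disjoint_Ioi le_rfl),
    setLIntegral_congr_fun measurableSet_Ioc h_low,
    setLIntegral_congr_fun measurableSet_Ioi h_high, setLIntegral_const,
    lintegral_ofReal_const_mul (inv_nonneg.2 hc₀.le), lintegral_Ioi_inv_sq hr₀, Real.volume_Ioc,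
    ← ENNReal.ofReal_mul (inv_nonneg.2 hc₀.le), one_mul, sub_zero, h_tail,
    ← ENNReal.ofReal_add hr₀.le hr₀.le, hr, ← two_mul, div_eq_mul_inv]

theorem lintegral_quadrantDensity_of_one_le {c : ℝ} (hc : 1 ≤ c) :
    ∫⁻ t in Ioi 0, ENNReal.ofReal (quadrantDensity c t)
      = ENNReal.ofReal ((2 + 3 * log c) / c ^ 2) := by
  set p := (c ^ 2)⁻¹ with hp
  have hc₀ : 0 < c := one_pos.trans_le hc
  have hp₀ : 0 < p := by positivity
  have hcp : c ^ 2 * p = 1 := mul_inv_cancel₀ (by positivity)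
  have hp₁ : p ≤ 1 := inv_le_one_of_one_le₀ (one_le_pow₀ hc)
  have hpc : p ≤ c := hp₁.trans hc
  have h_low : ∀ t ∈ Ioc 0 p, ENNReal.ofReal (quadrantDensity c t) = 1 := fun t ht => by
    have hct : c ^ 2 * t ≤ 1 := hcp ▸ mul_le_mul_of_nonneg_left ht.2 (sq_nonneg c)
    rw [quadrantDensity_eq_one (by nlinarith [ht.1]) hct (by nlinarith [ht.1, ht.2]),
      ENNReal.ofReal_one]
  have h_mid : ∀ t ∈ Ioc p c, ENNReal.ofReal (quadrantDensity c t)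
      = ENNReal.ofReal (p * t⁻¹) := fun t ht => by
    rw [quadrantDensity_eq_of_le_left hc ht.2
      (hcp ▸ mul_le_mul_of_nonneg_left ht.1.le (sq_nonneg c)), mul_inv]
  have h_high : ∀ t ∈ Ioi c, ENNReal.ofReal (quadrantDensity c t)
      = ENNReal.ofReal (c⁻¹ * (t ^ 2)⁻¹) := fun t ht => by
    have ht : c < t := ht
    rw [quadrantDensity_eq_of_le_right (hc.trans ht.le) ht.le (by nlinarith), mul_inv]
  have h_log : log (c / p) = 3 * log c := by
    rw [hp, div_inv_eq_mul, ← pow_succ', log_pow]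
    norm_num
  have h_mid_nonneg : 0 ≤ p * (3 * log c) := by have := log_nonneg hc; positivity
  rw [← Ioc_union_Ioi_eq_Ioi hc₀.le, lintegral_union measurableSet_Ioi (Ioc_disjoint_Ioi le_rfl),
    ← Ioc_union_Ioc_eq_Ioc hp₀.le hpc,
    lintegral_union measurableSet_Ioc (Ioc_disjoint_Ioc_of_le le_rfl),
    setLIntegral_congr_fun measurableSet_Ioc h_low, setLIntegral_congr_fun measurableSet_Ioc h_mid,
    setLIntegral_congr_fun measurableSet_Ioi h_high, setLIntegral_const, Real.volume_Ioc,
    one_mul, sub_zero, lintegral_ofReal_const_mul hp₀.le, lintegral_Ioc_inv hp₀ hpc, h_log,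
    lintegral_ofReal_const_mul (inv_nonneg.2 hc₀.le), lintegral_Ioi_inv_sq hc₀,
    ← ENNReal.ofReal_mul hp₀.le, ← ENNReal.ofReal_mul (inv_nonneg.2 hc₀.le),
    ← ENNReal.ofReal_add hp₀.le h_mid_nonneg, ← ENNReal.ofReal_add (by linarith) (by positivity)]
  congr 1
  rw [hp]
  field_simp
  ring

theorem lintegral_lintegral_quadrantDensity :
    ∫⁻ a in Ioi 0, ∫⁻ b in Ioi 0, ENNReal.ofReal (quadrantDensity a b) = 9 := by
  have h_small : ∀ a ∈ Ioc (0 : ℝ) 1, ∫⁻ b in Ioi 0, ENNReal.ofReal (quadrantDensity a b)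
      = ENNReal.ofReal (2 * (√a)⁻¹) := fun a ha => by
    rw [lintegral_quadrantDensity_of_le_one ha.1 ha.2, div_eq_mul_inv]
  have h_large : ∀ a ∈ Ioi (1 : ℝ), ∫⁻ b in Ioi 0, ENNReal.ofReal (quadrantDensity a b)
      = ENNReal.ofReal (2 * (a ^ 2)⁻¹) + ENNReal.ofReal (3 * (log a / a ^ 2)) := fun a ha => by
    have ha : 1 < a := ha
    rw [lintegral_quadrantDensity_of_one_le ha.le, ← ENNReal.ofReal_add (by positivity)
      (mul_nonneg zero_le_three (div_nonneg (log_nonneg ha.le) (sq_nonneg a)))]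
    congr 1
    ring
  have h_split := lintegral_union (μ := volume) (A := Ioc 0 1) measurableSet_Ioi
    (Ioc_disjoint_Ioi le_rfl) (f := fun a => ∫⁻ b in Ioi 0, ENNReal.ofReal (quadrantDensity a b))
  rw [Ioc_union_Ioi_eq_Ioi zero_le_one] at h_split
  rw [h_split, setLIntegral_congr_fun measurableSet_Ioc h_small,
    setLIntegral_congr_fun measurableSet_Ioi h_large, lintegral_add_left (by fun_prop),
    lintegral_ofReal_const_mul zero_le_two,
    lintegral_ofReal_const_mul zero_le_two, lintegral_ofReal_const_mul zero_le_three,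
    lintegral_Ioc_inv_sqrt, lintegral_Ioi_inv_sq one_pos, lintegral_Ioi_log_div_sq]
  norm_num

theorem measurable_quadrantDensity_abs :
    Measurable fun y : ℝ × ℝ => quadrantDensity |y.1| |y.2| := by
  unfold quadrantDensity
  fun_prop

theorem lintegral_quadrantDensity_abs :
    ∫⁻ y : ℝ × ℝ, ENNReal.ofReal (quadrantDensity |y.1| |y.2|) = 36 := by
  rw [Measure.volume_eq_prod,
    lintegral_prod _ measurable_quadrantDensity_abs.ennreal_ofReal.aemeasurable,
    lintegral_congr fun a => lintegral_comp_abs fun b => ENNReal.ofReal (quadrantDensity |a| b),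
    lintegral_const_mul' _ _ ENNReal.ofNat_ne_top,
    lintegral_comp_abs fun a => ∫⁻ b in Ioi 0, ENNReal.ofReal (quadrantDensity a b),
    lintegral_lintegral_quadrantDensity]
  norm_num

/-- real archimedian density: the integral over `(ℝ∖{0})²` of
`1/(max{1,|y₁|,|y₂|,|y₁y₂|⁻¹}·|y₁y₂|)` with respect to Lebesgue measure equals `36`. -/
theorem stmt11 :
    (∫ y in {y : ℝ × ℝ | y.1 ≠ 0 ∧ y.2 ≠ 0},
      (max (max 1 |y.1|) (max |y.2| |y.1 * y.2|⁻¹) * |y.1 * y.2|)⁻¹)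
    = 36 := by
  have h_axes : {y : ℝ × ℝ | y.1 ≠ 0 ∧ y.2 ≠ 0} = {0}ᶜ ×ˢ {0}ᶜ := rfl
  calc _ = ∫ y : ℝ × ℝ in {0}ᶜ ×ˢ {0}ᶜ, quadrantDensity |y.1| |y.2| := by
        rw [h_axes]
        refine setIntegral_congr_fun ((measurableSet_singleton 0).compl.prod
          (measurableSet_singleton 0).compl) fun y hy => ?_
        rw [abs_mul]
        exact inv_max_mul_eq_quadrantDensity (abs_pos.2 hy.1) (abs_pos.2 hy.2)
    _ = ∫ y : ℝ × ℝ, quadrantDensity |y.1| |y.2| := by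
        rw [Measure.volume_eq_prod, ← Measure.prod_restrict, restrict_compl_singleton]
    _ = 36 := by
        rw [integral_eq_lintegral_of_nonneg_ae (ae_of_all _ fun y => ?_)
          measurable_quadrantDensity_abs.aestronglyMeasurable, lintegral_quadrantDensity_abs]
        · norm_num
        · unfold quadrantDensity
          positivity
end

section
/- The integral ∫_{(ℂ∖{0})²} 1 / ( max{1, |y₁|², |y₂|², |y₁y₂|^{−2}} · |y₁y₂|² ) dλ(y₁) dλ(y₂) equals 9π², where λ is Lebesgue measure on ℂ ≅ ℝ². (Consequently, with each measure normalized as twice Lebesgue measure, the value is 36π².) -/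
/-!
The integrand depends only on `r = ‖y₁‖` and `s = ‖y₂‖`, so polar coordinates in each factor
turn the integral into `(2π)² ∫∫_{r, s > 0} r s F(r, s) dr ds`. On each region where one term of
the maximum dominates, `s F(r, s)` is a monomial in `s` or `1/s`. For `r ≤ 1` the term `(rs)⁻²`
dominates up to `s = r^(-1/2)` and `s²` beyond, giving `∫ s F = 1/r`; for `r ≥ 1` the dominating
terms are `(rs)⁻²`, `r²`, `s²` on `(0, r⁻²]`, `(r⁻², r]`, `(r, ∞)`, giving `(1 + 3 log r)/r⁴`.
Finally `∫₀¹ 1 dr + ∫₁^∞ (1 + 3 log r)/r³ dr = 1 + 5/4 = 9/4`.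
-/

open MeasureTheory Set Filter Topology
open scoped ENNReal

theorem lintegral_fun_norm_addHaar {E : Type*} [NormedAddCommGroup E] [NormedSpace ℝ E]
    [Nontrivial E] [FiniteDimensional ℝ E] [MeasurableSpace E] [BorelSpace E]
    (μ : Measure E) [μ.IsAddHaarMeasure] {f : ℝ → ℝ≥0∞} (hf : Measurable f) :
    ∫⁻ x, f ‖x‖ ∂μ = Module.finrank ℝ E * μ (Metric.ball 0 1) *
      ∫⁻ y in Ioi 0, ENNReal.ofReal (y ^ (Module.finrank ℝ E - 1)) * f y :=
  calc ∫⁻ x, f ‖x‖ ∂μ = ∫⁻ x : ({0}ᶜ : Set E), f ‖x.1‖ ∂(μ.comap (↑)) := by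
        rw [lintegral_subtype_comap (measurableSet_singleton _).compl (fun x => f ‖x‖),
          restrict_compl_singleton]
    _ = ∫⁻ x, f x.2 ∂μ.toSphere.prod (.volumeIoiPow (Module.finrank ℝ E - 1)) := by
        simpa using μ.measurePreserving_homeomorphUnitSphereProd.lintegral_comp_emb
          (Homeomorph.measurableEmbedding _) (fun x => f x.2)
    _ = μ.toSphere univ * ∫⁻ y : Ioi (0 : ℝ), f y ∂.volumeIoiPow (Module.finrank ℝ E - 1) := by
        refine (lintegral_prod (fun x : _ × Ioi (0 : ℝ) => f x.2)
          (hf.comp (measurable_subtype_coe.comp measurable_snd)).aemeasurable).trans ?_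
        exact (lintegral_const (∫⁻ y : Ioi (0 : ℝ), f y ∂_)).trans (mul_comm _ _)
    _ = _ := by
        rw [μ.toSphere_apply_univ]
        congr 1
        refine (lintegral_withDensity_eq_lintegral_mul _
          (measurable_subtype_coe.pow_const _).ennreal_ofReal
          (hf.comp measurable_subtype_coe)).trans ?_
        exact lintegral_subtype_comap measurableSet_Ioi (fun y => ENNReal.ofReal (y ^ _) * f y)

theorem Complex.lintegral_fun_norm {f : ℝ → ℝ≥0∞} (hf : Measurable f) :
    ∫⁻ z : ℂ, f ‖z‖ = ENNReal.ofReal (2 * Real.pi) * ∫⁻ r in Ioi 0, ENNReal.ofReal r * f r := by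
  rw [lintegral_fun_norm_addHaar volume hf, Complex.volume_ball]
  simp [Complex.finrank_real_complex, ENNReal.ofReal_mul, ← NNReal.coe_real_pi]

theorem setLIntegral_Ioi_eq_Ioc_add_Ioi {a b : ℝ} (hab : a ≤ b) (f : ℝ → ℝ≥0∞) :
    ∫⁻ x in Ioi a, f x = (∫⁻ x in Ioc a b, f x) + ∫⁻ x in Ioi b, f x := by
  rw [← Ioc_union_Ioi_eq_Ioi hab, lintegral_union measurableSet_Ioi (Ioc_disjoint_Ioi le_rfl)]

theorem setLIntegral_Ioc_eq_Ioc_add_Ioc {a b c : ℝ} (hab : a ≤ b) (hbc : b ≤ c)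
    (f : ℝ → ℝ≥0∞) :
    ∫⁻ x in Ioc a c, f x = (∫⁻ x in Ioc a b, f x) + ∫⁻ x in Ioc b c, f x := by
  rw [← Ioc_union_Ioc_eq_Ioc hab hbc,
    lintegral_union measurableSet_Ioc (Ioc_disjoint_Ioc_of_le le_rfl)]

theorem setLIntegral_Ioc_ofReal_deriv {g g' : ℝ → ℝ} {a b : ℝ} (hab : a ≤ b)
    (hcont : ContinuousOn g (Icc a b)) (hderiv : ∀ x ∈ Ioo a b, HasDerivAt g (g' x) x)
    (hpos : ∀ x ∈ Ioo a b, 0 ≤ g' x) :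
    ∫⁻ x in Ioc a b, ENNReal.ofReal (g' x) = ENNReal.ofReal (g b - g a) := by
  have hint := intervalIntegral.integrableOn_deriv_of_nonneg hcont hderiv hpos
  have hpos_ae : ∀ᵐ x ∂volume.restrict (Ioc a b), 0 ≤ g' x :=
    (ae_restrict_congr_set Ioo_ae_eq_Ioc).1
      ((ae_restrict_iff' measurableSet_Ioo).2 (.of_forall hpos))
  rw [← ofReal_integral_eq_lintegral_ofReal hint hpos_ae, ← intervalIntegral.integral_of_le hab,
    intervalIntegral.integral_eq_sub_of_hasDerivAt_of_le hab hcont hderiv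
      ((intervalIntegrable_iff_integrableOn_Ioc_of_le hab).2 hint)]

theorem setLIntegral_Ioi_ofReal_deriv {g g' : ℝ → ℝ} {a l : ℝ}
    (hderiv : ∀ x ∈ Ici a, HasDerivAt g (g' x) x) (hpos : ∀ x ∈ Ioi a, 0 ≤ g' x)
    (hlim : Tendsto g atTop (𝓝 l)) :
    ∫⁻ x in Ioi a, ENNReal.ofReal (g' x) = ENNReal.ofReal (l - g a) := by
  rw [← ofReal_integral_eq_lintegral_ofReal (integrableOn_Ioi_deriv_of_nonneg' hderiv hpos hlim)
    ((ae_restrict_iff' measurableSet_Ioi).2 (.of_forall hpos)),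
    integral_Ioi_of_hasDerivAt_of_nonneg' hderiv hpos hlim]

theorem setLIntegral_Ioc_zero_ofReal_id {a : ℝ} (ha : 0 ≤ a) :
    ∫⁻ x in Ioc 0 a, ENNReal.ofReal x = ENNReal.ofReal (a ^ 2 / 2) := by
  have hderiv (x : ℝ) : HasDerivAt (fun x : ℝ => x ^ 2 / 2) x x := by
    simpa using (hasDerivAt_pow 2 x).div_const 2
  simpa using setLIntegral_Ioc_ofReal_deriv ha (by fun_prop) (fun x _ => hderiv x)
    (fun x hx => hx.1.le)

theorem setLIntegral_Ioi_ofReal_inv_mul_pow_three {a c : ℝ} (ha : 0 < a) (hc : 0 < c) :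
    ∫⁻ x in Ioi a, ENNReal.ofReal ((c * x ^ 3)⁻¹) = ENNReal.ofReal ((2 * c * a ^ 2)⁻¹) := by
  have hderiv : ∀ x ∈ Ici a, HasDerivAt (fun x : ℝ => -(2 * c * x ^ 2)⁻¹) ((c * x ^ 3)⁻¹) x := by
    intro x hx
    have hx0 : x ≠ 0 := (ha.trans_le hx).ne'
    refine ((((hasDerivAt_pow 2 x).const_mul (2 * c)).inv (by positivity)).neg).congr_deriv ?_
    field_simp
    ring
  have hlim : Tendsto (fun x : ℝ => -(2 * c * x ^ 2)⁻¹) atTop (𝓝 0) := by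
    simpa using ((tendsto_pow_atTop two_ne_zero).const_mul_atTop
      (by positivity : 0 < 2 * c)).inv_tendsto_atTop.neg
  rw [setLIntegral_Ioi_ofReal_deriv hderiv (fun x hx => by have := ha.trans hx; positivity) hlim]
  simp

noncomputable def normIntegrand (r s : ℝ) : ℝ :=
  (max (max 1 (r ^ 2)) (max (s ^ 2) ((r * s) ^ 2)⁻¹) * (r * s) ^ 2)⁻¹

theorem normIntegrand_comm (r s : ℝ) : normIntegrand r s = normIntegrand s r := by
  unfold normIntegrand
  rw [mul_comm r s, max_max_max_comm, max_comm (1 : ℝ) (s ^ 2)]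

theorem normIntegrand_nonneg (r s : ℝ) : 0 ≤ normIntegrand r s :=
  inv_nonneg.2 <| mul_nonneg (zero_le_one.trans (le_max_of_le_left (le_max_left _ _))) (sq_nonneg _)

theorem measurable_normIntegrand : Measurable (Function.uncurry normIntegrand) := by
  unfold normIntegrand Function.uncurry
  fun_prop

theorem normIntegrand_eq_one {r s : ℝ} (hr : 0 < r) (hs : 0 < s) (h : r * s ≤ 1)
    (hr' : r ^ 2 * s ≤ 1) (hs' : r * s ^ 2 ≤ 1) : normIntegrand r s = 1 := by
  have hrs : 0 < (r * s) ^ 2 := by positivity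
  have le_inv : ∀ t, t * (r * s) ^ 2 ≤ 1 → t ≤ ((r * s) ^ 2)⁻¹ := fun t ht => by
    rwa [← one_div, le_div_iff₀ hrs]
  have h1 : 1 ≤ ((r * s) ^ 2)⁻¹ :=
    le_inv 1 (by rw [one_mul]; exact pow_le_one₀ (by positivity) h)
  have h2 : r ^ 2 ≤ ((r * s) ^ 2)⁻¹ :=
    le_inv _ (calc r ^ 2 * (r * s) ^ 2 = (r ^ 2 * s) ^ 2 := by ring
      _ ≤ 1 := pow_le_one₀ (by positivity) hr')
  have h3 : s ^ 2 ≤ ((r * s) ^ 2)⁻¹ :=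
    le_inv _ (calc s ^ 2 * (r * s) ^ 2 = (r * s ^ 2) ^ 2 := by ring
      _ ≤ 1 := pow_le_one₀ (by positivity) hs')
  have hmax : max (max 1 (r ^ 2)) (max (s ^ 2) ((r * s) ^ 2)⁻¹) = ((r * s) ^ 2)⁻¹ :=
    le_antisymm (max_le (max_le h1 h2) (max_le h3 le_rfl)) (le_max_of_le_right (le_max_right _ _))
  rw [normIntegrand, hmax, inv_mul_cancel₀ hrs.ne', inv_one]

theorem normIntegrand_eq_of_le {r s : ℝ} (hs : 0 < s) (hsr : s ≤ r) (hr : 1 ≤ r)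
    (h : 1 ≤ r ^ 2 * s) : normIntegrand r s = (r ^ 4 * s ^ 2)⁻¹ := by
  have hrs : 0 < (r * s) ^ 2 := by positivity
  have hmax : max (max 1 (r ^ 2)) (max (s ^ 2) ((r * s) ^ 2)⁻¹) = r ^ 2 := by
    refine le_antisymm (max_le (max_le (by nlinarith) le_rfl) (max_le (by nlinarith) ?_))
      (le_max_of_le_left (le_max_right _ _))
    rw [← one_div, div_le_iff₀ hrs]
    nlinarith
  rw [normIntegrand, hmax]
  ring

theorem setLIntegral_normIntegrand_of_le_one {r : ℝ} (hr : 0 < r) (hr1 : r ≤ 1) :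
    ∫⁻ s in Ioi 0, ENNReal.ofReal (s * normIntegrand r s) = ENNReal.ofReal r⁻¹ := by
  set a := (√r)⁻¹
  have ha : 0 < a := by positivity
  have ha2 : a ^ 2 = r⁻¹ := by rw [inv_pow, Real.sq_sqrt hr.le]
  have ha1 : 1 ≤ a := one_le_inv₀ (by positivity) |>.2 (Real.sqrt_le_one.2 hr1)
  have on_Ioc : ∀ s ∈ Ioc 0 a, ENNReal.ofReal (s * normIntegrand r s) = ENNReal.ofReal s := by
    rintro s ⟨hs, hsa⟩
    have hrs2 : r * s ^ 2 ≤ 1 := by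
      calc r * s ^ 2 ≤ r * a ^ 2 := by gcongr
        _ = 1 := by rw [ha2, mul_inv_cancel₀ hr.ne']
    have hrs : r * s ≤ 1 := (pow_le_one_iff_of_nonneg (by positivity) two_ne_zero).1 (by nlinarith)
    have hr2s : r ^ 2 * s ≤ 1 := (pow_le_one_iff_of_nonneg (by positivity) two_ne_zero).1 <|
      calc (r ^ 2 * s) ^ 2 = r ^ 3 * (r * s ^ 2) := by ring
        _ ≤ 1 := mul_le_one₀ (pow_le_one₀ hr.le hr1) (by positivity) hrs2
    rw [normIntegrand_eq_one hr hs hrs hr2s hrs2, mul_one]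
  have on_Ioi : ∀ s ∈ Ioi a, ENNReal.ofReal (s * normIntegrand r s)
      = ENNReal.ofReal ((r ^ 2 * s ^ 3)⁻¹) := by
    intro s (has : a < s)
    have hs1 : 1 ≤ s := ha1.trans has.le
    have hsr : 1 ≤ s ^ 2 * r := by
      rw [← mul_inv_cancel₀ hr.ne', ← ha2, mul_comm]
      gcongr
    rw [normIntegrand_comm, normIntegrand_eq_of_le hr (hr1.trans hs1) hs1 hsr]
    congr 1
    field_simp
  rw [setLIntegral_Ioi_eq_Ioc_add_Ioi ha.le, setLIntegral_congr_fun measurableSet_Ioc on_Ioc,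
    setLIntegral_congr_fun measurableSet_Ioi on_Ioi, setLIntegral_Ioc_zero_ofReal_id ha.le,
    setLIntegral_Ioi_ofReal_inv_mul_pow_three ha (by positivity),
    ← ENNReal.ofReal_add (by positivity) (by positivity), ha2]
  congr 1
  field_simp
  ring

theorem setLIntegral_normIntegrand_of_one_le {r : ℝ} (hr1 : 1 ≤ r) :
    ∫⁻ s in Ioi 0, ENNReal.ofReal (s * normIntegrand r s)
      = ENNReal.ofReal ((1 + 3 * Real.log r) / r ^ 4) := by
  have hr : 0 < r := one_pos.trans_le hr1
  set b := (r ^ 2)⁻¹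
  have hb : 0 < b := by positivity
  have hb1 : b ≤ 1 := inv_le_one_of_one_le₀ (one_le_pow₀ hr1)
  have hbr : r ^ 2 * b = 1 := mul_inv_cancel₀ (by positivity)
  have hlog : 0 ≤ Real.log r := Real.log_nonneg hr1
  have on_Ioc_zero : ∀ s ∈ Ioc 0 b, ENNReal.ofReal (s * normIntegrand r s) = ENNReal.ofReal s := by
    rintro s ⟨hs, hsb⟩
    have hr2s : r ^ 2 * s ≤ 1 := hbr ▸ by gcongr
    have hrs : r * s ≤ 1 := le_trans (by gcongr; exact le_self_pow₀ hr1 two_ne_zero) hr2s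
    have hrs2 : r * s ^ 2 ≤ 1 := le_trans (by nlinarith) hrs
    rw [normIntegrand_eq_one hr hs hrs hr2s hrs2, mul_one]
  have on_Ioc : ∀ s ∈ Ioc b r, ENNReal.ofReal (s * normIntegrand r s)
      = ENNReal.ofReal (s⁻¹ / r ^ 4) := by
    rintro s ⟨hbs, hsr⟩
    have hs : 0 < s := hb.trans hbs
    rw [normIntegrand_eq_of_le hs hsr hr1 (hbr ▸ by gcongr)]
    congr 1
    field_simp
  have on_Ioi : ∀ s ∈ Ioi r, ENNReal.ofReal (s * normIntegrand r s)
      = ENNReal.ofReal ((r ^ 2 * s ^ 3)⁻¹) := by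
    intro s (hrs : r < s)
    have hs1 : 1 ≤ s := hr1.trans hrs.le
    rw [normIntegrand_comm, normIntegrand_eq_of_le hr hrs.le hs1 (by nlinarith)]
    congr 1
    field_simp
  have log_part : ∫⁻ s in Ioc b r, ENNReal.ofReal (s⁻¹ / r ^ 4)
      = ENNReal.ofReal (3 * Real.log r / r ^ 4) := by
    convert setLIntegral_Ioc_ofReal_deriv (hb1.trans hr1)
      ((Real.continuousOn_log.mono fun x hx => (hb.trans_le hx.1).ne').div_const (r ^ 4))
      (fun x hx => (Real.hasDerivAt_log (hb.trans hx.1).ne').div_const (r ^ 4))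
      (fun x hx => by have := hb.trans hx.1; positivity) using 2
    simp only [b, Real.log_inv, Real.log_pow]
    ring
  rw [setLIntegral_Ioi_eq_Ioc_add_Ioi hr.le, setLIntegral_Ioc_eq_Ioc_add_Ioc hb.le (hb1.trans hr1),
    setLIntegral_congr_fun measurableSet_Ioc on_Ioc_zero,
    setLIntegral_congr_fun measurableSet_Ioc on_Ioc,
    setLIntegral_congr_fun measurableSet_Ioi on_Ioi, setLIntegral_Ioc_zero_ofReal_id hb.le,
    log_part, setLIntegral_Ioi_ofReal_inv_mul_pow_three hr (by positivity),
    ← ENNReal.ofReal_add (by positivity) (by positivity),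
    ← ENNReal.ofReal_add (by positivity) (by positivity)]
  congr 1
  simp only [b]
  field_simp
  ring

theorem setLIntegral_Ioi_one_ofReal_one_add_three_log_div_pow_three :
    ∫⁻ r in Ioi 1, ENNReal.ofReal ((1 + 3 * Real.log r) / r ^ 3) = ENNReal.ofReal (5 / 4) := by
  have hderiv : ∀ x ∈ Ici (1 : ℝ), HasDerivAt (fun x => -(5 + 6 * Real.log x) / (4 * x ^ 2))
      ((1 + 3 * Real.log x) / x ^ 3) x := by
    intro x hx
    have hx0 : x ≠ 0 := (one_pos.trans_le hx).ne'
    refine ((((Real.hasDerivAt_log hx0).const_mul 6).const_add 5).neg.div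
      ((hasDerivAt_pow 2 x).const_mul 4) (by positivity)).congr_deriv ?_
    simp only [Pi.neg_apply]
    field_simp
    ring
  have hlim : Tendsto (fun x => -(5 + 6 * Real.log x) / (4 * x ^ 2)) atTop (𝓝 0) := by
    have hinv : Tendsto (fun x : ℝ => (x ^ 2)⁻¹) atTop (𝓝 0) :=
      (tendsto_pow_atTop two_ne_zero).inv_tendsto_atTop
    have hlog : Tendsto (fun x => Real.log x / x * x⁻¹) atTop (𝓝 0) := by
      simpa using Real.isLittleO_log_id_atTop.tendsto_div_nhds_zero.mul tendsto_inv_atTop_zero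
    convert ((hinv.const_mul (5 / 4)).add (hlog.const_mul (3 / 2))).neg using 1
    · ext x
      ring
    · simp
  rw [setLIntegral_Ioi_ofReal_deriv hderiv
    (fun x (hx : 1 < x) => by have := Real.log_nonneg hx.le; positivity) hlim]
  norm_num

theorem setLIntegral_Ioi_setLIntegral_normIntegrand :
    ∫⁻ r in Ioi 0, ENNReal.ofReal r * ∫⁻ s in Ioi 0, ENNReal.ofReal (s * normIntegrand r s)
      = ENNReal.ofReal (9 / 4) := by
  have on_Ioc : ∀ r ∈ Ioc (0 : ℝ) 1,
      ENNReal.ofReal r * ∫⁻ s in Ioi 0, ENNReal.ofReal (s * normIntegrand r s) = 1 := by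
    rintro r ⟨hr, hr1⟩
    rw [setLIntegral_normIntegrand_of_le_one hr hr1, ← ENNReal.ofReal_mul hr.le,
      mul_inv_cancel₀ hr.ne', ENNReal.ofReal_one]
  have on_Ioi : ∀ r ∈ Ioi (1 : ℝ),
      ENNReal.ofReal r * ∫⁻ s in Ioi 0, ENNReal.ofReal (s * normIntegrand r s)
        = ENNReal.ofReal ((1 + 3 * Real.log r) / r ^ 3) := by
    intro r (hr : 1 < r)
    rw [setLIntegral_normIntegrand_of_one_le hr.le, ← ENNReal.ofReal_mul (by positivity)]
    congr 1
    field_simp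
  rw [setLIntegral_Ioi_eq_Ioc_add_Ioi zero_le_one, setLIntegral_congr_fun measurableSet_Ioc on_Ioc,
    setLIntegral_congr_fun measurableSet_Ioi on_Ioi, setLIntegral_one, Real.volume_Ioc,
    setLIntegral_Ioi_one_ofReal_one_add_three_log_div_pow_three,
    ← ENNReal.ofReal_add (by norm_num) (by norm_num)]
  norm_num

theorem lintegral_normIntegrand_norm :
    ∫⁻ y : ℂ × ℂ, ENNReal.ofReal (normIntegrand ‖y.1‖ ‖y.2‖)
      = ENNReal.ofReal (9 * Real.pi ^ 2) := by
  have inner (z : ℂ) : ∫⁻ w : ℂ, ENNReal.ofReal (normIntegrand ‖z‖ ‖w‖)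
      = ENNReal.ofReal (2 * Real.pi) * ∫⁻ s in Ioi 0, ENNReal.ofReal (s * normIntegrand ‖z‖ s) := by
    rw [Complex.lintegral_fun_norm measurable_normIntegrand.of_uncurry_left.ennreal_ofReal]
    congr 1
    exact setLIntegral_congr_fun measurableSet_Ioi fun s hs => (ENNReal.ofReal_mul hs.le).symm
  have hF : Measurable fun y : ℂ × ℂ => ENNReal.ofReal (normIntegrand ‖y.1‖ ‖y.2‖) :=
    (measurable_normIntegrand.comp (measurable_norm.prodMap measurable_norm)).ennreal_ofReal
  have hG : Measurable fun r => ∫⁻ s in Ioi 0, ENNReal.ofReal (s * normIntegrand r s) :=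
    (measurable_snd.mul measurable_normIntegrand).ennreal_ofReal.lintegral_prod_right
  rw [Measure.volume_eq_prod, lintegral_prod _ hF.aemeasurable]
  simp only [inner]
  rw [lintegral_const_mul _
      (f := fun z : ℂ => ∫⁻ s in Ioi 0, ENNReal.ofReal (s * normIntegrand ‖z‖ s))
      (hG.comp measurable_norm), Complex.lintegral_fun_norm hG,
    setLIntegral_Ioi_setLIntegral_normIntegrand, ← ENNReal.ofReal_mul (by positivity),
    ← ENNReal.ofReal_mul (by positivity)]
  congr 1
  ring

/-- complex archimedian density: the integral over `(ℂ∖{0})²` of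
`1/(max{1,|y₁|²,|y₂|²,|y₁y₂|⁻²}·|y₁y₂|²)` with respect to Lebesgue measure on `ℂ² ≅ ℝ⁴`
equals `9π²`. -/
theorem stmt12 :
    (∫ y in {y : ℂ × ℂ | y.1 ≠ 0 ∧ y.2 ≠ 0},
      (max (max 1 (‖y.1‖ ^ 2))
          (max (‖y.2‖ ^ 2) ((‖y.1 * y.2‖ ^ 2)⁻¹)) *
        ‖y.1 * y.2‖ ^ 2)⁻¹)
    = 9 * Real.pi ^ 2 := by
  have hset : {y : ℂ × ℂ | y.1 ≠ 0 ∧ y.2 ≠ 0} = {0}ᶜ ×ˢ {0}ᶜ := rfl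
  have hmeas : Measurable fun y : ℂ × ℂ => normIntegrand ‖y.1‖ ‖y.2‖ :=
    measurable_normIntegrand.comp (measurable_norm.prodMap measurable_norm)
  simp only [norm_mul]
  rw [hset, Measure.volume_eq_prod, ← Measure.prod_restrict, restrict_compl_singleton,
    ← Measure.volume_eq_prod]
  change ∫ y : ℂ × ℂ, normIntegrand ‖y.1‖ ‖y.2‖ = _
  rw [integral_eq_lintegral_of_nonneg_ae (.of_forall fun _ => normIntegrand_nonneg _ _)
    hmeas.aestronglyMeasurable, lintegral_normIntegrand_norm, ENNReal.toReal_ofReal (by positivity)]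
end

section
/- For u ∈ O_K ∖ {0} let d(u) denote the number of divisors of u up to units (equivalently the number of ideals of O_K containing the ideal (u)). Then for all U ≥ 2, Σ_{u ∈ O_K ∖ {0}, ‖u‖_∞ ≤ U} d(u) · ‖u‖_∞^{−5/6} = O(U^{1/6} log U), with an implied constant depending only on K. -/
/-!
Since `𝓞 K` is a principal ideal domain, every ideal containing `u` is generated by a divisor `a`
of `u`, and `u = a b` with `‖b‖ ≤ U / ‖a‖`. Hence the sum is at most
`∑_{‖a‖ ≤ U} ‖a‖^{-5/6} ∑_{‖b‖ ≤ U/‖a‖} ‖b‖^{-5/6}`.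
As `𝓞 K` is a lattice in `ℂ` and `‖x‖ = |x|²`, there are `O(X)` nonzero `x` with `‖x‖ ≤ X`, and
`‖x‖ ≥ 1` for them. By partial summation this gives `∑_{‖b‖ ≤ Y} ‖b‖^{-σ} = O(Y^{1-σ})` for
`0 ≤ σ < 1`, and `∑_{‖a‖ ≤ U} ‖a‖^{-1} = O(1 + log U)`. So the inner sum is `O((U/‖a‖)^{1/6})`,
and the whole sum is `O(U^{1/6} ∑_{‖a‖ ≤ U} ‖a‖^{-1}) = O(U^{1/6} log U)`.
Nothing beyond the multiplicativity of `‖·‖`, the bound `‖x‖ ≥ 1` and the linear count enters, so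
the estimate holds in every principal ideal domain with such a norm.
-/

open NumberField Finset

theorem Real.one_sub_mul_rpow_neg_le {σ x : ℝ} (hσ0 : 0 ≤ σ) (hσ1 : σ ≤ 1) (hx : 1 ≤ x) :
    (1 - σ) * x ^ (-σ) ≤ x ^ (1 - σ) - (x - 1) ^ (1 - σ) := by
  have hx0 : 0 < x := zero_lt_one.trans_le hx
  have hsplit : x - 1 = x * (1 + -x⁻¹) := by field_simp; ring
  have hpow : x ^ (1 - σ) = x * x ^ (-σ) := by
    rw [sub_eq_add_neg, rpow_add hx0, rpow_one]
  -- Bernoulli's inequality bounds `(1 - x⁻¹) ^ (1 - σ)` by `1 - (1 - σ) x⁻¹`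
  have hbern := rpow_one_add_le_one_add_mul_self (s := -x⁻¹)
    (by simpa using inv_le_one_of_one_le₀ hx) (sub_nonneg.2 hσ1) (by linarith)
  rw [hsplit, mul_rpow hx0.le (by simpa using inv_le_one_of_one_le₀ hx), hpow]
  have hxy := mul_nonneg hx0.le (rpow_nonneg hx0.le (-σ))
  have : x * x ^ (-σ) * (1 + (1 - σ) * -x⁻¹) = x * x ^ (-σ) - (1 - σ) * x ^ (-σ) := by
    field_simp; ring
  linarith [mul_le_mul_of_nonneg_left hbern hxy]

theorem Real.sum_range_rpow_neg_le {σ : ℝ} (hσ0 : 0 ≤ σ) (hσ1 : σ < 1) (n : ℕ) :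
    ∑ k ∈ range n, ((k : ℝ) + 1) ^ (-σ) ≤ (n : ℝ) ^ (1 - σ) / (1 - σ) := by
  induction n with
  | zero => simp [zero_rpow (sub_pos.2 hσ1).ne']
  | succ n ih =>
    have key := one_sub_mul_rpow_neg_le hσ0 hσ1.le (x := (n : ℝ) + 1) (by simp)
    rw [sum_range_succ, Nat.cast_succ, le_div_iff₀ (sub_pos.2 hσ1)]
    rw [le_div_iff₀ (sub_pos.2 hσ1)] at ih
    simp only [add_sub_cancel_right] at key
    nlinarith

theorem Real.rpow_neg_mul_div_rpow_one_sub {a U : ℝ} (ha : 0 < a) (hU : 0 ≤ U) (σ : ℝ) :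
    a ^ (-σ) * (U / a) ^ (1 - σ) = U ^ (1 - σ) * a⁻¹ := by
  rw [div_rpow hU ha.le, ← rpow_neg_one, mul_div, mul_comm, mul_div_assoc, ← rpow_sub ha]
  ring_nf

namespace Finset

variable {α : Type*} {s : Finset α} {w : α → ℝ} {C : ℝ}

theorem sum_range_mul_le_of_sum_range_le {a b f : ℕ → ℝ} (hf : Antitone f)
    (hf0 : ∀ k, 0 ≤ f k) (hab : ∀ m, ∑ k ∈ range m, a k ≤ ∑ k ∈ range m, b k) (n : ℕ) :
    ∑ k ∈ range n, a k * f k ≤ ∑ k ∈ range n, b k * f k := by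
  have abel : ∀ n, (∑ k ∈ range n, b k - ∑ k ∈ range n, a k) * f n ≤
      ∑ k ∈ range n, (b k - a k) * f k := by
    intro n
    induction n with
    | zero => simp
    | succ n ih =>
      have hD := sub_nonneg.2 (hab (n + 1))
      simp only [sum_range_succ] at hD ⊢
      nlinarith [hf n.le_succ]
  have := (mul_nonneg (sub_nonneg.2 (hab n)) (hf0 n)).trans (abel n)
  simp only [sub_mul, sum_sub_distrib] at this
  linarith

theorem nonneg_of_card_filter_le (hcard : ∀ Y ≥ 1, (#{u ∈ s | w u ≤ Y} : ℝ) ≤ C * Y) :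
    0 ≤ C := by
  simpa using (Nat.cast_nonneg _).trans (hcard 1 le_rfl)

theorem sum_le_of_card_filter_le {g : ℝ → ℝ} {n : ℕ} (hw : ∀ u ∈ s, 1 ≤ w u)
    (hwn : ∀ u ∈ s, w u < n + 1) (hcard : ∀ Y ≥ 1, (#{u ∈ s | w u ≤ Y} : ℝ) ≤ C * Y)
    (hg : AntitoneOn g (Set.Ici 1)) (hg0 : ∀ x ≥ 1, 0 ≤ g x) :
    ∑ u ∈ s, g (w u) ≤ 2 * C * ∑ k ∈ range n, g (k + 1) := by
  classical
  have hC := nonneg_of_card_filter_le hcard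
  have hfloor : ∀ u ∈ s, 1 ≤ ⌊w u⌋₊ := fun u hu => Nat.le_floor (by exact_mod_cast hw u hu)
  -- `shell u = k` means `⌊w u⌋₊ = k + 1`
  set shell : α → ℕ := fun u => ⌊w u⌋₊ - 1
  have hpartial : ∀ m, ∑ k ∈ range m, (#{u ∈ s | shell u = k} : ℝ) ≤ ∑ k ∈ range m, 2 * C := by
    intro m
    rcases Nat.eq_zero_or_pos m with rfl | hm
    · simp
    have hsub : {u ∈ s | shell u ∈ range m} ⊆ {u ∈ s | w u ≤ m + 1} := by
      intro u hu
      simp only [mem_filter, mem_range, shell] at hu ⊢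
      refine ⟨hu.1, (Nat.lt_floor_add_one (w u)).le.trans ?_⟩
      have : ⌊w u⌋₊ ≤ m := by have := hfloor u hu.1; omega
      exact_mod_cast Nat.add_le_add_right this 1
    have hm1 : (1 : ℝ) ≤ m := by exact_mod_cast hm
    calc ∑ k ∈ range m, (#{u ∈ s | shell u = k} : ℝ)
        = #{u ∈ s | shell u ∈ range m} := by
          exact_mod_cast sum_card_fiberwise_eq_card_filter _ _ _
      _ ≤ #{u ∈ s | w u ≤ m + 1} := by exact_mod_cast card_le_card hsub
      _ ≤ C * (m + 1) := hcard _ (by linarith)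
      _ ≤ ∑ k ∈ range m, 2 * C := by
          rw [sum_const, card_range, nsmul_eq_mul]; nlinarith
  have hshell : ∀ u ∈ s, shell u ∈ range n := by
    intro u hu
    have := (Nat.floor_lt (n := n + 1) (zero_le_one.trans (hw u hu))).2
      (by exact_mod_cast hwn u hu)
    have := hfloor u hu
    simp only [mem_range, shell]
    omega
  calc ∑ u ∈ s, g (w u) ≤ ∑ u ∈ s, g (shell u + 1) := by
        refine sum_le_sum fun u hu => hg (by simp) (hw u hu) ?_
        simp only [shell, Nat.cast_sub (hfloor u hu), Nat.cast_one, sub_add_cancel]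
        exact Nat.floor_le (zero_le_one.trans (hw u hu))
    _ = ∑ k ∈ range n, (#{u ∈ s | shell u = k} : ℝ) * g (k + 1) := by
        rw [← sum_fiberwise_of_maps_to hshell]
        refine sum_congr rfl fun k _ => ?_
        rw [sum_congr rfl fun u hu => by rw [(mem_filter.1 hu).2], sum_const, nsmul_eq_mul]
    _ ≤ ∑ k ∈ range n, 2 * C * g (k + 1) :=
        sum_range_mul_le_of_sum_range_le
          (fun i j hij => hg (by simp) (by simp) (by simpa using hij))
          (fun k => hg0 _ (by simp)) hpartial n
    _ = 2 * C * ∑ k ∈ range n, g (k + 1) := (mul_sum ..).symm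

theorem sum_rpow_neg_le_of_card_filter_le {X σ : ℝ} (hw : ∀ u ∈ s, 1 ≤ w u)
    (hwX : ∀ u ∈ s, w u ≤ X) (hcard : ∀ Y ≥ 1, (#{u ∈ s | w u ≤ Y} : ℝ) ≤ C * Y) (hX : 0 ≤ X)
    (hσ0 : 0 ≤ σ) (hσ1 : σ < 1) :
    ∑ u ∈ s, w u ^ (-σ) ≤ 2 * C / (1 - σ) * X ^ (1 - σ) := by
  have hC := nonneg_of_card_filter_le hcard
  calc ∑ u ∈ s, w u ^ (-σ)
      ≤ 2 * C * ∑ k ∈ range ⌊X⌋₊, ((k : ℝ) + 1) ^ (-σ) :=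
        sum_le_of_card_filter_le hw (fun u hu => (hwX u hu).trans_lt (Nat.lt_floor_add_one X))
          hcard ((Real.antitoneOn_rpow_Ioi_of_exponent_nonpos (by linarith)).mono
            fun _ hx => Set.mem_Ioi.2 (zero_lt_one.trans_le hx))
          fun x _ => Real.rpow_nonneg (by linarith) _
    _ ≤ 2 * C * ((⌊X⌋₊ : ℝ) ^ (1 - σ) / (1 - σ)) := by
        gcongr; exact Real.sum_range_rpow_neg_le hσ0 hσ1 _
    _ ≤ 2 * C / (1 - σ) * X ^ (1 - σ) := by
        rw [mul_div, div_mul_eq_mul_div]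
        gcongr
        exact Nat.floor_le hX

theorem sum_inv_le_of_card_filter_le {X : ℝ} (hw : ∀ u ∈ s, 1 ≤ w u) (hwX : ∀ u ∈ s, w u ≤ X)
    (hcard : ∀ Y ≥ 1, (#{u ∈ s | w u ≤ Y} : ℝ) ≤ C * Y) (hX : 1 ≤ X) :
    ∑ u ∈ s, (w u)⁻¹ ≤ 2 * C * (1 + Real.log X) := by
  have hC := nonneg_of_card_filter_le hcard
  calc ∑ u ∈ s, (w u)⁻¹
      ≤ 2 * C * ∑ k ∈ range ⌊X⌋₊, ((k : ℝ) + 1)⁻¹ :=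
        sum_le_of_card_filter_le hw (fun u hu => (hwX u hu).trans_lt (Nat.lt_floor_add_one X))
          hcard (fun x hx y _ hxy => inv_anti₀ (zero_lt_one.trans_le hx) hxy)
          fun x hx => inv_nonneg.2 (zero_le_one.trans hx)
    _ = 2 * C * harmonic ⌊X⌋₊ := by simp [harmonic]
    _ ≤ 2 * C * (1 + Real.log X) := by
        gcongr
        refine (harmonic_le_one_add_log _).trans ?_
        gcongr
        · exact_mod_cast Nat.floor_pos.2 hX
        · exact Nat.floor_le (by linarith)

end Finset

section PrincipalIdealRing

variable {R : Type*} [CommRing R]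

open Submodule.IsPrincipal in
theorem card_ideal_span_le_le_card_filter_dvd [IsPrincipalIdealRing R]
    [DecidableRel (α := R) (· ∣ ·)] {u : R} {s : Finset R} (hs : ∀ a, a ∣ u → a ∈ s) :
    Nat.card {I : Ideal R // Ideal.span {u} ≤ I} ≤ #{a ∈ s | a ∣ u} := by
  have hgen (I : {I : Ideal R // Ideal.span {u} ≤ I}) : generator I.1 ∈ {a ∈ s | a ∣ u} := by
    have h := (mem_iff_generator_dvd I.1).1 (Ideal.span_singleton_le_iff_mem _ |>.1 I.2)
    exact mem_filter.2 ⟨hs _ h, h⟩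
  calc Nat.card {I : Ideal R // Ideal.span {u} ≤ I}
      ≤ Nat.card {a // a ∈ {a ∈ s | a ∣ u}} :=
        Nat.card_le_card_of_injective (fun I => ⟨_, hgen I⟩) fun I J hIJ => Subtype.ext <| by
          rw [← span_singleton_generator I.1, ← span_singleton_generator J.1]
          exact congrArg (fun a => Ideal.span {a.1}) hIJ
    _ = #{a ∈ s | a ∣ u} := Nat.card_eq_finsetCard _

namespace MonoidWithZeroHom

variable {N : R →*₀ ℝ}

theorem apply_nonneg_of_one_le (hN : ∀ u ≠ 0, 1 ≤ N u) (u : R) : 0 ≤ N u := by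
  rcases eq_or_ne u 0 with rfl | hu
  · simp
  · exact zero_le_one.trans (hN u hu)

theorem apply_le_apply_of_dvd (hN : ∀ u ≠ 0, 1 ≤ N u) {a u : R} (hau : a ∣ u) (hu : u ≠ 0) :
    N a ≤ N u := by
  obtain ⟨b, rfl⟩ := hau
  rw [map_mul]
  exact le_mul_of_one_le_right (zero_le_one.trans (hN a (left_ne_zero_of_mul hu)))
    (hN b (right_ne_zero_of_mul hu))

end MonoidWithZeroHom

variable {N : R →*₀ ℝ} {B : ℝ → Finset R}

theorem filter_dvd_eq_image_mul [DecidableEq R] [NoZeroDivisors R]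
    (hB : ∀ X u, u ∈ B X ↔ u ≠ 0 ∧ N u ≤ X) {a : R} [DecidablePred (a ∣ ·)] (ha : 0 < N a)
    (U : ℝ) : {u ∈ B U | a ∣ u} = (B (U / N a)).image (a * ·) := by
  ext u
  simp only [mem_filter, mem_image, hB, le_div_iff₀ ha]
  constructor
  · rintro ⟨⟨hu, hNu⟩, b, rfl⟩
    exact ⟨b, ⟨right_ne_zero_of_mul hu, by rwa [map_mul, mul_comm] at hNu⟩, rfl⟩
  · rintro ⟨b, ⟨hb, hNb⟩, rfl⟩
    have ha0 : a ≠ 0 := fun h => by simp [h] at ha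
    exact ⟨⟨mul_ne_zero ha0 hb, by rwa [map_mul, mul_comm]⟩, dvd_mul_right a b⟩

theorem sum_card_filter_dvd_mul_eq [DecidableEq R] [NoZeroDivisors R]
    [DecidableRel (α := R) (· ∣ ·)] (hN : ∀ u ≠ 0, 1 ≤ N u)
    (hB : ∀ X u, u ∈ B X ↔ u ≠ 0 ∧ N u ≤ X) (U : ℝ) (f : R → ℝ) :
    ∑ u ∈ B U, #{a ∈ B U | a ∣ u} * f u = ∑ a ∈ B U, ∑ b ∈ B (U / N a), f (a * b) := by
  calc ∑ u ∈ B U, #{a ∈ B U | a ∣ u} * f u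
      = ∑ u ∈ B U, ∑ a ∈ B U with a ∣ u, f u := by simp only [sum_const, nsmul_eq_mul]
    _ = ∑ a ∈ B U, ∑ u ∈ B U with a ∣ u, f u :=
        sum_comm' fun u a => by simp only [mem_filter]; tauto
    _ = ∑ a ∈ B U, ∑ b ∈ B (U / N a), f (a * b) := sum_congr rfl fun a ha => by
        have ha0 := ((hB U a).1 ha).1
        rw [filter_dvd_eq_image_mul hB (zero_lt_one.trans_le (hN a ha0)),
          sum_image (mul_right_injective₀ ha0).injOn]

theorem sum_card_ideal_mul_le [NoZeroDivisors R] [IsPrincipalIdealRing R]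
    (hN : ∀ u ≠ 0, 1 ≤ N u) (hB : ∀ X u, u ∈ B X ↔ u ≠ 0 ∧ N u ≤ X) (U : ℝ) {f : R → ℝ}
    (hf : ∀ u, 0 ≤ f u) :
    ∑ u ∈ B U, (Nat.card {I : Ideal R // Ideal.span {u} ≤ I} : ℝ) * f u
      ≤ ∑ a ∈ B U, ∑ b ∈ B (U / N a), f (a * b) := by
  classical
  rw [← sum_card_filter_dvd_mul_eq hN hB]
  refine sum_le_sum fun u hu => mul_le_mul_of_nonneg_right ?_ (hf u)
  obtain ⟨hu0, huU⟩ := (hB U u).1 hu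
  exact_mod_cast card_ideal_span_le_le_card_filter_dvd fun a hau =>
    (hB U a).2 ⟨ne_zero_of_dvd_ne_zero hu0 hau,
      (MonoidWithZeroHom.apply_le_apply_of_dvd hN hau hu0).trans huU⟩

theorem tsum_card_ideal_mul_rpow_neg_le [NoZeroDivisors R] [IsPrincipalIdealRing R]
    (hN : ∀ u ≠ 0, 1 ≤ N u) {C : ℝ} (hfin : ∀ X, {u | u ≠ 0 ∧ N u ≤ X}.Finite)
    (hcard : ∀ X ≥ 1, ({u | u ≠ 0 ∧ N u ≤ X}.ncard : ℝ) ≤ C * X)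
    {σ : ℝ} (hσ0 : 0 ≤ σ) (hσ1 : σ < 1) {U : ℝ} (hU : 1 ≤ U) :
    ∑' u : {u : R // u ≠ 0 ∧ N u ≤ U},
        (Nat.card {I : Ideal R // Ideal.span {u.1} ≤ I} : ℝ) * N u ^ (-σ)
      ≤ 4 * C ^ 2 / (1 - σ) * U ^ (1 - σ) * (1 + Real.log U) := by
  set B : ℝ → Finset R := fun X => (hfin X).toFinset
  have hB : ∀ X u, u ∈ B X ↔ u ≠ 0 ∧ N u ≤ X := fun X u => Set.Finite.mem_toFinset _
  have hB1 : ∀ X, ∀ u ∈ B X, 1 ≤ N u := fun X u hu => hN u ((hB X u).1 hu).1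
  have hBX : ∀ X, ∀ u ∈ B X, N u ≤ X := fun X u hu => ((hB X u).1 hu).2
  have hBcard : ∀ X, ∀ Y ≥ 1, (#{u ∈ B X | N u ≤ Y} : ℝ) ≤ C * Y := fun X Y hY => by
    refine le_trans ?_ (hcard Y hY)
    rw [Set.ncard_eq_toFinset_card _ (hfin Y)]
    exact_mod_cast card_le_card fun u hu => by simp_all [B]
  have hC := nonneg_of_card_filter_le (hBcard U)
  have hN0 := MonoidWithZeroHom.apply_nonneg_of_one_le hN
  calc ∑' u : {u : R // u ≠ 0 ∧ N u ≤ U},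
          (Nat.card {I : Ideal R // Ideal.span {u.1} ≤ I} : ℝ) * N u ^ (-σ)
      = ∑ u ∈ B U, (Nat.card {I : Ideal R // Ideal.span {u} ≤ I} : ℝ) * N u ^ (-σ) := by
        rw [← Finset.tsum_subtype', Set.Finite.coe_toFinset]; rfl
    _ ≤ ∑ a ∈ B U, ∑ b ∈ B (U / N a), N (a * b) ^ (-σ) :=
        sum_card_ideal_mul_le hN hB U fun u => Real.rpow_nonneg (hN0 u) _
    _ = ∑ a ∈ B U, N a ^ (-σ) * ∑ b ∈ B (U / N a), N b ^ (-σ) := by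
        simp only [map_mul, Real.mul_rpow (hN0 _) (hN0 _), mul_sum]
    _ ≤ ∑ a ∈ B U, N a ^ (-σ) * (2 * C / (1 - σ) * (U / N a) ^ (1 - σ)) := by
        refine sum_le_sum fun a ha => mul_le_mul_of_nonneg_left ?_ (Real.rpow_nonneg (hN0 a) _)
        exact sum_rpow_neg_le_of_card_filter_le (hB1 _) (hBX _) (hBcard _)
          (div_nonneg (by linarith) (hN0 a)) hσ0 hσ1
    _ = 2 * C / (1 - σ) * U ^ (1 - σ) * ∑ a ∈ B U, (N a)⁻¹ := by
        rw [mul_sum]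
        refine sum_congr rfl fun a ha => ?_
        rw [mul_left_comm, Real.rpow_neg_mul_div_rpow_one_sub (zero_lt_one.trans_le (hB1 U a ha))
          (by linarith)]
        ring
    _ ≤ 2 * C / (1 - σ) * U ^ (1 - σ) * (2 * C * (1 + Real.log U)) := by
        gcongr
        exact sum_inv_le_of_card_filter_le (hB1 _) (hBX _) (hBcard _) hU
    _ = 4 * C ^ 2 / (1 - σ) * U ^ (1 - σ) * (1 + Real.log U) := by ring

end PrincipalIdealRing

theorem Set.finite_and_ncard_le_of_abs_le {α ι : Type*} [Fintype ι] {φ : α → ι → ℤ}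
    (hφ : φ.Injective) {S : Set α} {r : ℝ} (hr : 0 ≤ r) (h : ∀ u ∈ S, ∀ i, |(φ u i : ℝ)| ≤ r) :
    S.Finite ∧ (S.ncard : ℝ) ≤ (2 * r + 1) ^ Fintype.card ι := by
  classical
  set box : Finset (ι → ℤ) := Finset.Icc (fun _ => -⌊r⌋) (fun _ => ⌊r⌋)
  have hmaps : ∀ u ∈ S, φ u ∈ box := fun u hu => by
    simp only [box, Finset.mem_Icc, Pi.le_def, neg_le, Int.le_floor, Int.cast_neg]
    exact ⟨fun i => by linarith [(abs_le.1 (h u hu i)).1], fun i => (abs_le.1 (h u hu i)).2⟩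
  have hfin : S.Finite := (box.finite_toSet.preimage hφ.injOn).subset hmaps
  refine ⟨hfin, ?_⟩
  have hfloor : (0 : ℤ) ≤ ⌊r⌋ := Int.floor_nonneg.2 hr
  calc (S.ncard : ℝ) ≤ (box : Set (ι → ℤ)).ncard := by
        exact_mod_cast Set.ncard_le_ncard_of_injOn φ hmaps hφ.injOn
    _ = ((2 * ⌊r⌋ + 1 : ℤ) : ℝ) ^ Fintype.card ι := by
        rw [Set.ncard_coe_finset, Pi.card_Icc, prod_const, card_univ, Int.card_Icc,
          show ⌊r⌋ + 1 - -⌊r⌋ = 2 * ⌊r⌋ + 1 by ring]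
        rw [Nat.cast_pow, ← Int.cast_natCast, Int.toNat_of_nonneg (by omega)]
    _ ≤ (2 * r + 1) ^ Fintype.card ι := by
        gcongr
        push_cast
        linarith [Int.floor_le r]

section ImaginaryQuadratic

variable {K : Type*} [Field K] [NumberField K]

theorem normSq_embedding_eq_norm (hdeg : Module.finrank ℚ K = 2) {ι : K →+* ℂ}
    (himag : ∃ x : K, (ι x).im ≠ 0) (x : K) :
    Complex.normSq (ι x) = Algebra.norm ℚ x := by
  classical
  set σ₁ : K →ₐ[ℚ] ℂ := ι.toRatAlgHom
  set σ₂ : K →ₐ[ℚ] ℂ := ((starRingEnd ℂ).comp ι).toRatAlgHom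
  have hne : σ₁ ≠ σ₂ := fun h => by
    obtain ⟨x₀, hx₀⟩ := himag
    exact hx₀ (Complex.conj_eq_iff_im.1 (DFunLike.congr_fun h x₀).symm)
  have huniv : (univ : Finset (K →ₐ[ℚ] ℂ)) = {σ₁, σ₂} :=
    (eq_univ_of_card _ (by rw [card_pair hne, AlgHom.card, hdeg])).symm
  have h := Algebra.norm_eq_prod_embeddings ℚ ℂ x
  rw [huniv, prod_pair hne, eq_ratCast] at h
  exact_mod_cast (Complex.mul_conj (ι x)).symm.trans h.symm

theorem one_le_normSq_embedding (hdeg : Module.finrank ℚ K = 2) {ι : K →+* ℂ}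
    (himag : ∃ x : K, (ι x).im ≠ 0) {u : 𝓞 K} (hu : u ≠ 0) : 1 ≤ Complex.normSq (ι u) := by
  have hnorm : Complex.normSq (ι u) = (Algebra.norm ℤ u : ℝ) := by
    rw [normSq_embedding_eq_norm hdeg himag, ← Algebra.coe_norm_int]; push_cast; rfl
  have hpos : 0 < Complex.normSq (ι u) :=
    Complex.normSq_pos.2 ((map_ne_zero ι).2 (by exact_mod_cast hu))
  rw [hnorm] at hpos ⊢
  exact_mod_cast Int.cast_pos.1 hpos

theorem exists_im_embedding_ne_zero {ι : K →+* ℂ} (himag : ∃ x : K, (ι x).im ≠ 0) :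
    ∃ u : 𝓞 K, (ι u).im ≠ 0 := by
  by_contra! h
  obtain ⟨x, hx⟩ := himag
  obtain ⟨a, b, -, rfl⟩ := IsFractionRing.div_surjective (𝓞 K) x
  simp [map_div₀, Complex.div_im, h] at hx

theorem embedding_eq_sum_repr_smul (ι : K →+* ℂ) (u : 𝓞 K) :
    ι u = ∑ i, ((RingOfIntegers.basis K).repr u i : ℝ) • ι (RingOfIntegers.basis K i) := by
  conv_lhs => rw [← (RingOfIntegers.basis K).sum_repr u]
  simp [map_sum]

theorem span_embedding_basis_eq_top {ι : K →+* ℂ} (himag : ∃ x : K, (ι x).im ≠ 0) :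
    Submodule.span ℝ (Set.range fun i => ι (RingOfIntegers.basis K i)) = ⊤ := by
  have hmem (u : 𝓞 K) :
      ι u ∈ Submodule.span ℝ (Set.range fun i => ι (RingOfIntegers.basis K i)) := by
    rw [embedding_eq_sum_repr_smul]
    exact Submodule.sum_mem _ fun i _ => Submodule.smul_mem _ _ (Submodule.subset_span ⟨i, rfl⟩)
  obtain ⟨w, hw⟩ := exists_im_embedding_ne_zero himag
  have hli : LinearIndependent ℝ ![1, ι w] := LinearIndependent.pair_iff.2 fun s t hst => by
    have him := congrArg Complex.im hst
    have hre := congrArg Complex.re hst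
    simp only [Complex.add_im, Complex.add_re, Complex.real_smul, Complex.mul_im, Complex.mul_re,
      Complex.ofReal_re, Complex.ofReal_im, Complex.one_re, Complex.one_im, Complex.zero_im,
      Complex.zero_re] at him hre
    have ht : t = 0 := by simpa [hw] using him
    subst ht
    simpa using hre
  rw [eq_top_iff, ← hli.span_eq_top_of_card_eq_finrank (by simp), Submodule.span_le]
  rintro _ ⟨i, rfl⟩
  fin_cases i
  · simpa using hmem 1
  · exact hmem w

theorem exists_basis_repr_embedding_eq (hdeg : Module.finrank ℚ K = 2) {ι : K →+* ℂ}
    (himag : ∃ x : K, (ι x).im ≠ 0) :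
    ∃ B : Module.Basis (Module.Free.ChooseBasisIndex ℤ (𝓞 K)) ℝ ℂ,
      ∀ (u : 𝓞 K) i, B.repr (ι u) i = (RingOfIntegers.basis K).repr u i := by
  have hcard : Fintype.card (Module.Free.ChooseBasisIndex ℤ (𝓞 K)) = Module.finrank ℝ ℂ := by
    rw [← Module.finrank_eq_card_chooseBasisIndex, RingOfIntegers.rank, hdeg,
      Complex.finrank_real_complex]
  set B := basisOfTopLeSpanOfCardEqFinrank _ (span_embedding_basis_eq_top himag).ge hcard
  have hB (i) : ι (RingOfIntegers.basis K i) = B i := by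
    simp [B, coe_basisOfTopLeSpanOfCardEqFinrank]
  refine ⟨B, fun u i => ?_⟩
  simp only [embedding_eq_sum_repr_smul ι u, hB, Module.Basis.repr_sum_self]

theorem exists_finite_and_ncard_normSq_le (hdeg : Module.finrank ℚ K = 2) {ι : K →+* ℂ}
    (himag : ∃ x : K, (ι x).im ≠ 0) :
    ∃ C : ℝ, ∀ X, {u : 𝓞 K | u ≠ 0 ∧ Complex.normSq (ι u) ≤ X}.Finite ∧
      (1 ≤ X → ({u : 𝓞 K | u ≠ 0 ∧ Complex.normSq (ι u) ≤ X}.ncard : ℝ) ≤ C * X) := by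
  obtain ⟨B, hB⟩ := exists_basis_repr_embedding_eq hdeg himag
  set c := ‖B.equivFunL.toContinuousLinearMap‖
  have hcard2 : Fintype.card (Module.Free.ChooseBasisIndex ℤ (𝓞 K)) = 2 := by
    rw [← Module.finrank_eq_card_chooseBasisIndex, RingOfIntegers.rank, hdeg]
  refine ⟨(2 * c + 1) ^ 2, fun X => ?_⟩
  have hbound : ∀ u ∈ {u : 𝓞 K | u ≠ 0 ∧ Complex.normSq (ι u) ≤ X}, ∀ i,
      |((RingOfIntegers.basis K).repr u i : ℝ)| ≤ c * √X := by
    intro u hu i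
    rw [← hB, ← Real.norm_eq_abs]
    calc ‖B.repr (ι u) i‖ = ‖B.equivFunL (ι u) i‖ := rfl
      _ ≤ ‖B.equivFunL (ι u)‖ := norm_le_pi_norm _ i
      _ ≤ c * ‖ι u‖ := B.equivFunL.toContinuousLinearMap.le_opNorm _
      _ ≤ c * √X := by
        gcongr
        exact (le_abs_self _).trans
          (Real.abs_le_sqrt (by simpa [Complex.normSq_eq_norm_sq] using hu.2))
  obtain ⟨hfin, hcard⟩ := Set.finite_and_ncard_le_of_abs_le
    (DFunLike.coe_injective.comp (RingOfIntegers.basis K).repr.injective) (by positivity) hbound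
  refine ⟨hfin, fun hX => hcard.trans ?_⟩
  have hsqrt : 1 ≤ √X := Real.one_le_sqrt.2 hX
  calc (2 * (c * √X) + 1) ^ Fintype.card (Module.Free.ChooseBasisIndex ℤ (𝓞 K))
      ≤ ((2 * c + 1) * √X) ^ 2 := by
        rw [hcard2]; gcongr; nlinarith [norm_nonneg B.equivFunL.toContinuousLinearMap]
    _ = (2 * c + 1) ^ 2 * X := by rw [mul_pow, Real.sq_sqrt (by linarith)]

end ImaginaryQuadratic

/-- divisor sum estimate: with `d(u)` the number of divisors of `u` up to
units (i.e. the number of ideals of `𝓞 K` containing `(u)`), for all `U ≥ 2` one has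
`Σ_{u ≠ 0, ‖u‖ ≤ U} d(u)·‖u‖^{−5/6} = O(U^{1/6} log U)`. -/
theorem stmt13 (K : Type) [Field K] [NumberField K]
    (hdeg : Module.finrank ℚ K = 2)
    (ι : K →+* ℂ) (himag : ∃ x : K, (ι x).im ≠ 0)
    (hcl : NumberField.classNumber K = 1)
    (nrm : 𝓞 K → ℝ) (hnrm : ∀ x : 𝓞 K, nrm x = ‖ι (x : K)‖ ^ 2)
    (d : 𝓞 K → ℕ)
    (hd : ∀ u : 𝓞 K, d u = Nat.card {I : Ideal (𝓞 K) // Ideal.span {u} ≤ I}) :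
    ∃ C > (0 : ℝ), ∀ U : ℝ, U ≥ 2 →
      (∑' u : {u : 𝓞 K // u ≠ 0 ∧ nrm u ≤ U}, (d (u : 𝓞 K) : ℝ) * nrm (u : 𝓞 K) ^ (-(5 : ℝ) / 6))
        ≤ C * U ^ ((1 : ℝ) / 6) * Real.log U := by
  have : IsPrincipalIdealRing (𝓞 K) := classNumber_eq_one_iff.1 hcl
  set N : 𝓞 K →*₀ ℝ := Complex.normSq.comp (ι.comp (algebraMap (𝓞 K) K)).toMonoidWithZeroHom
  obtain rfl : nrm = N := funext fun x => by simp [N, hnrm, Complex.normSq_eq_norm_sq]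
  obtain rfl : d = fun u => Nat.card {I : Ideal (𝓞 K) // Ideal.span {u} ≤ I} := funext hd
  obtain ⟨C, hC⟩ := exists_finite_and_ncard_normSq_le hdeg himag
  refine ⟨72 * C ^ 2 + 1, by positivity, fun U hU => ?_⟩
  have hlog0 : 0 ≤ Real.log U := Real.log_nonneg (by linarith)
  have hlog : 1 + Real.log U ≤ 3 * Real.log U := by
    linarith [Real.log_two_gt_d9, Real.log_le_log two_pos hU]
  rw [neg_div]
  calc _ ≤ 4 * C ^ 2 / (1 - 5 / 6) * U ^ (1 - 5 / 6 : ℝ) * (1 + Real.log U) :=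
        tsum_card_ideal_mul_rpow_neg_le (N := N) (σ := 5 / 6) (U := U)
          (fun u hu => one_le_normSq_embedding hdeg himag hu)
          (fun X => (hC X).1) (fun X hX => (hC X).2 hX) (by norm_num) (by norm_num)
          (by linarith)
    _ = 24 * C ^ 2 * U ^ ((1 : ℝ) / 6) * (1 + Real.log U) := by
        rw [show (1 : ℝ) - 5 / 6 = 1 / 6 by norm_num]; ring
    _ ≤ 24 * C ^ 2 * U ^ ((1 : ℝ) / 6) * (3 * Real.log U) := by gcongr
    _ ≤ (72 * C ^ 2 + 1) * U ^ ((1 : ℝ) / 6) * Real.log U := by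
        nlinarith [mul_nonneg (Real.rpow_nonneg (by linarith : (0 : ℝ) ≤ U) ((1 : ℝ) / 6)) hlog0]
end

section
/- For z = (z_{j,k})_{j≠k} ∈ (O_K ∖ {0})⁶ indexed by ordered pairs (j,k), j ≠ k ∈ {1,2,3}, set ζ_j = z_{j,k} z_{j,l} z_{k,j}² z_{l,j}² for {j,k,l} = {1,2,3}. Then for all B ≥ 2, Σ_{z : ‖ζ_j‖_∞ ≤ B for j=1,2,3} ( ∏_{j≠k} ‖z_{j,k}‖_∞^{−1} ) · max_{j=1,2,3} ‖ζ_j‖_∞^{1/6} = O( B^{1/6} (log B)⁵ ), with an implied constant depending only on K. -/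
/-!
Bound `max_j ‖ζ_j‖^{1/6}` by `Σ_j ‖ζ_j‖^{1/6}` and estimate each `j` separately. Nonzero
integers have `‖x‖ = |N(x)| ≥ 1`, so they are `1`-separated in `ℂ`, and packing discs gives
`#{x ≠ 0 : ‖x‖ ≤ X} ≤ 9 X`. Dyadic decomposition turns this into `Σ_{‖x‖ ≤ Y} ‖x‖^{-5/6} ≪ Y^{1/6}`
and `Σ_{‖x‖ ≤ B} ‖x‖⁻¹ ≪ log B`. Write `‖ζ_j‖ = ‖z_{jk}‖ D` with
`D = ‖z_{jl}‖ ‖z_{kj}‖² ‖z_{lj}‖²` and sum first over `z_{jk}`, which is constrained by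
`‖z_{jk}‖ ≤ B / D`: the first bound gives `(B / D)^{1/6}`, whose `D^{-1/6}` cancels the `D^{1/6}`
in `‖ζ_j‖^{1/6}`. What is left is `B^{1/6}` times five free sums `Σ_{‖x‖ ≤ B} ‖x‖⁻¹`.
-/

open NumberField

/-- The six ordered pairs `(j,k)` with `j ≠ k ∈ {1,2,3}`. -/
abbrev Pair : Type := {p : Fin 3 × Fin 3 // p.1 ≠ p.2}

/-- `ζ_j = z_{j,k} z_{j,l} z_{k,j}² z_{l,j}²` for `{j,k,l} = {1,2,3}`. -/
def zeta {R : Type*} [CommRing R] (z : Pair → R) (j k l : Fin 3)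
    (hjk : j ≠ k) (hjl : j ≠ l) : R :=
  z ⟨(j, k), hjk⟩ * z ⟨(j, l), hjl⟩ * z ⟨(k, j), hjk.symm⟩ ^ 2 * z ⟨(l, j), hjl.symm⟩ ^ 2

open Finset MeasureTheory

lemma Complex.measureReal_ball (a : ℂ) {r : ℝ} (hr : 0 ≤ r) :
    volume.real (Metric.ball a r) = r ^ 2 * Real.pi := by
  simp [measureReal_def, ENNReal.toReal_ofReal hr]

theorem Complex.card_le_of_one_le_dist {s : Finset ℂ} {R : ℝ} (hR : 0 ≤ R)
    (hsep : (s : Set ℂ).Pairwise fun z w => 1 ≤ dist z w) (hs : ∀ z ∈ s, ‖z‖ ≤ R) :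
    (#s : ℝ) ≤ 4 * (R + 1 / 2) ^ 2 := by
  have hdisj : (s : Set ℂ).PairwiseDisjoint fun z => Metric.ball z (1 / 2) :=
    fun z hz w hw hzw => Metric.ball_disjoint_ball (by linarith [hsep hz hw hzw])
  have hsub : (⋃ z ∈ s, Metric.ball z (1 / 2)) ⊆ Metric.ball 0 (R + 1 / 2) := by
    simp only [Set.iUnion_subset_iff]
    intro z hz w hw
    rw [Metric.mem_ball, dist_eq_norm] at hw
    rw [Metric.mem_ball, dist_zero_right]
    linarith [norm_le_norm_add_norm_sub' w z, hs z hz]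
  have hvol := measureReal_mono (μ := volume) hsub
  rw [measureReal_biUnion_finset hdisj fun _ _ => measurableSet_ball,
    Complex.measureReal_ball _ (by positivity)] at hvol
  simp only [Complex.measureReal_ball _ (by norm_num : (0 : ℝ) ≤ 1 / 2), sum_const,
    nsmul_eq_mul] at hvol
  nlinarith [Real.pi_pos]

lemma two_rpow_lt_two {σ : ℝ} (hσ : σ < 1) : (2 : ℝ) ^ σ < 2 := by
  simpa using Real.rpow_lt_rpow_of_exponent_lt one_lt_two hσ

section Dyadic

variable {α : Type*} {s : Finset α} {N : α → ℝ} {c : ℝ}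

lemma filter_le_eq_empty_of_lt_one (hs : ∀ x ∈ s, 1 ≤ N x) {X : ℝ} (hX : X < 1) :
    {x ∈ s | N x ≤ X} = ∅ :=
  filter_false_of_mem fun x hx hxX => by linarith [hs x hx]

lemma nonneg_of_card_filter_le (hcount : ∀ X, 0 ≤ X → (#{x ∈ s | N x ≤ X} : ℝ) ≤ c * X) :
    0 ≤ c := by
  simpa using (Nat.cast_nonneg _).trans (hcount 1 zero_le_one)

lemma sum_filter_le_le_sum_filter_le_half_add
    (hcount : ∀ X, 0 ≤ X → (#{x ∈ s | N x ≤ X} : ℝ) ≤ c * X) (f : α → ℝ) {X b : ℝ}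
    (hX : 0 ≤ X) (hb : 0 ≤ b) (hf : ∀ x ∈ s, X / 2 < N x → f x ≤ b) :
    ∑ x ∈ s with N x ≤ X, f x ≤ ∑ x ∈ s with N x ≤ X / 2, f x + c * X * b := by
  rw [← sum_filter_add_sum_filter_not {x ∈ s | N x ≤ X} (fun x => N x ≤ X / 2), filter_filter,
    filter_filter]
  refine add_le_add (le_of_eq <| sum_congr (filter_congr fun x _ => ?_) fun _ _ => rfl) ?_
  · exact ⟨fun h => h.2, fun h => ⟨by linarith, h⟩⟩
  · calc ∑ x ∈ s with N x ≤ X ∧ ¬N x ≤ X / 2, f x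
        ≤ #{x ∈ s | N x ≤ X ∧ ¬N x ≤ X / 2} • b := by
          refine sum_le_card_nsmul _ _ _ fun x hx => ?_
          rw [mem_filter] at hx
          exact hf x hx.1 (not_le.mp hx.2.2)
      _ ≤ #{x ∈ s | N x ≤ X} • b := by
          refine nsmul_le_nsmul_left hb (card_le_card fun x hx => ?_)
          simp only [mem_filter] at hx ⊢
          exact ⟨hx.1, hx.2.1⟩
      _ ≤ c * X * b := by
          rw [nsmul_eq_mul]
          exact mul_le_mul_of_nonneg_right (hcount X hX) hb

variable (hs : ∀ x ∈ s, 1 ≤ N x) (hcount : ∀ X, 0 ≤ X → (#{x ∈ s | N x ≤ X} : ℝ) ≤ c * X)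
include hs hcount

theorem sum_filter_le_rpow_neg_le {σ : ℝ} (hσ0 : 0 ≤ σ) (hσ1 : σ < 1) {X : ℝ} (hX : 0 ≤ X) :
    ∑ x ∈ s with N x ≤ X, N x ^ (-σ) ≤ c * 2 ^ σ / (1 - 2 ^ σ / 2) * X ^ (1 - σ) := by
  have hu1 : (1 : ℝ) ≤ 2 ^ σ := Real.one_le_rpow (by norm_num) hσ0
  have hu2 := two_rpow_lt_two hσ1
  have hC0 : 0 ≤ c * 2 ^ σ / (1 - 2 ^ σ / 2) :=
    div_nonneg (mul_nonneg (nonneg_of_card_filter_le hcount) (by positivity)) (by linarith)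
  -- the constant is the fixed point of `C ↦ C 2^(σ-1) + c 2^σ`, the recursion of one dyadic step
  have hC : c * 2 ^ σ / (1 - 2 ^ σ / 2) * (2 ^ σ / 2) + c * 2 ^ σ
      = c * 2 ^ σ / (1 - 2 ^ σ / 2) := by
    have : (2 : ℝ) - 2 ^ σ ≠ 0 := by linarith
    field_simp
    ring
  obtain ⟨n, hn⟩ := pow_unbounded_of_one_lt X one_lt_two
  induction n generalizing X with
  | zero =>
    rw [filter_le_eq_empty_of_lt_one hs (by simpa using hn), sum_empty]
    positivity
  | succ n ih =>
    rcases lt_or_ge X 1 with hX1 | hX1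
    · rw [filter_le_eq_empty_of_lt_one hs hX1, sum_empty]
      positivity
    have hXpos : 0 < X := by linarith
    have hhalf : (X / 2) ^ (1 - σ) = X ^ (1 - σ) * (2 ^ σ / 2) := by
      rw [Real.div_rpow hX (by norm_num), Real.rpow_sub two_pos, Real.rpow_one]
      field_simp
    have hshell : X * (X / 2) ^ (-σ) = X ^ (1 - σ) * 2 ^ σ := by
      rw [Real.rpow_neg (by positivity), Real.div_rpow hX (by norm_num), Real.rpow_sub hXpos,
        Real.rpow_one]
      field_simp
    calc ∑ x ∈ s with N x ≤ X, N x ^ (-σ)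
        ≤ ∑ x ∈ s with N x ≤ X / 2, N x ^ (-σ) + c * X * (X / 2) ^ (-σ) :=
          sum_filter_le_le_sum_filter_le_half_add hcount _ hX (by positivity) fun x _ hx =>
            Real.rpow_le_rpow_of_nonpos (by positivity) hx.le (by linarith)
      _ ≤ c * 2 ^ σ / (1 - 2 ^ σ / 2) * (X / 2) ^ (1 - σ) + c * X * (X / 2) ^ (-σ) := by
          gcongr
          exact ih (by positivity) (by rw [pow_succ] at hn; linarith)
      _ = (c * 2 ^ σ / (1 - 2 ^ σ / 2) * (2 ^ σ / 2) + c * 2 ^ σ) * X ^ (1 - σ) := by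
          rw [mul_assoc c, hshell, hhalf]; ring
      _ = c * 2 ^ σ / (1 - 2 ^ σ / 2) * X ^ (1 - σ) := by rw [hC]

theorem sum_filter_le_inv_le_log {X : ℝ} (hX : 2 ≤ X) :
    ∑ x ∈ s with N x ≤ X, (N x)⁻¹ ≤ 4 * c / Real.log 2 * Real.log X := by
  have hc := nonneg_of_card_filter_le hcount
  have hdyadic : ∀ n : ℕ, ∀ X : ℝ, X < 2 ^ n → ∑ x ∈ s with N x ≤ X, (N x)⁻¹ ≤ 2 * c * n := by
    intro n
    induction n with
    | zero =>
      intro X hX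
      rw [filter_le_eq_empty_of_lt_one hs (by simpa using hX), sum_empty]
      simp
    | succ n ih =>
      intro X hXn
      rcases lt_or_ge X 1 with hX1 | hX1
      · rw [filter_le_eq_empty_of_lt_one hs hX1, sum_empty]
        positivity
      calc ∑ x ∈ s with N x ≤ X, (N x)⁻¹
          ≤ ∑ x ∈ s with N x ≤ X / 2, (N x)⁻¹ + c * X * (X / 2)⁻¹ :=
            sum_filter_le_le_sum_filter_le_half_add hcount _ (by linarith) (by positivity)
              fun x _ hx => inv_anti₀ (by positivity) hx.le
        _ ≤ 2 * c * n + c * X * (X / 2)⁻¹ := by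
            gcongr
            exact ih _ (by rw [pow_succ] at hXn; linarith)
        _ = 2 * c * ↑(n + 1) := by
            push_cast
            field_simp
  obtain ⟨n, hn, hXn⟩ := exists_nat_pow_near (by linarith : 1 ≤ X) one_lt_two
  have hn1 : 1 ≤ n := by
    by_contra! h
    interval_cases n
    norm_num at hXn
    linarith
  have hlog : n * Real.log 2 ≤ Real.log X := by
    rw [← Real.log_pow]
    exact Real.log_le_log (by positivity) (by exact_mod_cast hn)
  calc ∑ x ∈ s with N x ≤ X, (N x)⁻¹ ≤ 2 * c * ↑(n + 1) := hdyadic _ _ hXn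
    _ ≤ 4 * c * n := by push_cast; nlinarith [(Nat.one_le_cast (α := ℝ)).mpr hn1]
    _ ≤ 4 * c / Real.log 2 * Real.log X := by
        rw [div_mul_eq_mul_div, le_div_iff₀ (Real.log_pos one_lt_two)]
        nlinarith [Real.log_pos one_lt_two]

end Dyadic

theorem finite_setOf_ne_zero_le {M : Type*} [Zero M] {N : M → ℝ} {c : ℝ}
    (hcount : ∀ (t : Finset M) (X : ℝ), 0 ≤ X → (∀ x ∈ t, x ≠ 0 ∧ N x ≤ X) → (#t : ℝ) ≤ c * X)
    (X : ℝ) : {x : M | x ≠ 0 ∧ N x ≤ X}.Finite := by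
  by_contra hinf
  obtain ⟨t, hts, htcard⟩ := Set.Infinite.exists_subset_card_eq hinf (⌊c * max X 0⌋₊ + 1)
  have := hcount t _ (le_max_right X 0) fun x hx => ⟨(hts hx).1, (hts hx).2.trans (le_max_left X 0)⟩
  rw [htcard] at this
  push_cast at this
  linarith [Nat.lt_floor_add_one (c * max X 0)]

theorem Fintype.sum_le_mul_sum_pow_of_sum_funSplitAt_le {ι α : Type*} [Fintype ι]
    [DecidableEq ι] [Fintype α] (q : ι) (F : (ι → α) → ℝ) (u : α → ℝ) (K : ℝ)
    (h : ∀ w : {i // i ≠ q} → α, ∑ x, F ((Equiv.funSplitAt q α).symm (x, w)) ≤ K * ∏ i, u (w i)) :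
    ∑ z, F z ≤ K * (∑ x, u x) ^ (Fintype.card ι - 1) := by
  calc ∑ z, F z = ∑ w : {i // i ≠ q} → α, ∑ x, F ((Equiv.funSplitAt q α).symm (x, w)) := by
        rw [← (Equiv.funSplitAt q α).symm.sum_comp, Fintype.sum_prod_type_right]
    _ ≤ ∑ w : {i // i ≠ q} → α, K * ∏ i, u (w i) := sum_le_sum fun w _ => h w
    _ = K * (∑ x, u x) ^ (Fintype.card ι - 1) := by
        rw [← mul_sum, ← Fintype.prod_sum (fun _ x => u x), prod_const, card_univ,
          Fintype.card_subtype_compl, Fintype.card_subtype_eq]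

lemma inv_mul_mul_rpow_sixth {a D : ℝ} (ha : 0 < a) (hD : 0 ≤ D) :
    a⁻¹ * (a * D) ^ (1 / 6 : ℝ) = a ^ (-(5 / 6) : ℝ) * D ^ (1 / 6 : ℝ) := by
  rw [Real.mul_rpow ha.le hD, ← mul_assoc, ← Real.rpow_neg_one, ← Real.rpow_add ha]
  norm_num

lemma sum_ite_inv_mul_rpow_le {M : Type*} {N : M → ℝ} {s : Finset M} (hs : ∀ x ∈ s, 1 ≤ N x)
    {A : ℝ} (hA : ∀ X, 0 ≤ X → ∑ x ∈ s with N x ≤ X, N x ^ (-(5 / 6) : ℝ) ≤ A * X ^ (1 / 6 : ℝ))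
    {B D : ℝ} (hB : 0 ≤ B) (hD : 0 < D) :
    ∑ x ∈ s, (if N x * D ≤ B then (N x)⁻¹ * (N x * D) ^ (1 / 6 : ℝ) else 0)
      ≤ A * B ^ (1 / 6 : ℝ) := by
  rw [← sum_filter]
  calc ∑ x ∈ s with N x * D ≤ B, (N x)⁻¹ * (N x * D) ^ (1 / 6 : ℝ)
      = (∑ x ∈ s with N x ≤ B / D, N x ^ (-(5 / 6) : ℝ)) * D ^ (1 / 6 : ℝ) := by
        rw [sum_mul]
        refine sum_congr (filter_congr fun x _ => (le_div_iff₀ hD).symm) fun x hx => ?_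
        exact inv_mul_mul_rpow_sixth (by linarith [hs x (mem_filter.mp hx).1]) hD.le
    _ ≤ A * (B / D) ^ (1 / 6 : ℝ) * D ^ (1 / 6 : ℝ) := by
        gcongr
        exact hA _ (by positivity)
    _ = A * B ^ (1 / 6 : ℝ) := by
        rw [mul_assoc, ← Real.mul_rpow (by positivity) hD.le, div_mul_cancel₀ _ hD.ne']

section Zeta

variable {M : Type*} [CommRing M]

def ZetaBounded (N : M → ℝ) (B : ℝ) (z : Pair → M) : Prop :=
  (∀ p, z p ≠ 0) ∧ ∀ (j k l : Fin 3) (hjk : j ≠ k) (hjl : j ≠ l) (_ : k ≠ l),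
    N (zeta z j k l hjk hjl) ≤ B

noncomputable def zetaSummand (N : M → ℝ) (z : Pair → M) : ℝ :=
  (∏ p, (N (z p))⁻¹) *
    max (N (zeta z 0 1 2 (by decide) (by decide)) ^ (1 / 6 : ℝ))
      (max (N (zeta z 1 2 0 (by decide) (by decide)) ^ (1 / 6 : ℝ))
        (N (zeta z 2 0 1 (by decide) (by decide)) ^ (1 / 6 : ℝ)))

noncomputable def zetaTerm (N : M → ℝ) (B : ℝ) (z : Pair → M) (j k l : Fin 3) (hjk : j ≠ k)
    (hjl : j ≠ l) : ℝ :=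
  if N (zeta z j k l hjk hjl) ≤ B then (∏ p, (N (z p))⁻¹) * N (zeta z j k l hjk hjl) ^ (1 / 6 : ℝ)
  else 0

variable {N : M → ℝ} (hmul : ∀ x y, N (x * y) = N x * N y)
include hmul

lemma map_zeta_of_map_mul (z : Pair → M)
    (j k l : Fin 3) (hjk : j ≠ k) (hjl : j ≠ l) :
    N (zeta z j k l hjk hjl) = N (z ⟨(j, k), hjk⟩) *
      (N (z ⟨(j, l), hjl⟩) * N (z ⟨(k, j), hjk.symm⟩) ^ 2 * N (z ⟨(l, j), hjl.symm⟩) ^ 2) := by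
  simp only [zeta, hmul, sq]
  ring

lemma map_le_of_map_zeta_le (hN : ∀ x, x ≠ 0 → 1 ≤ N x) {z : Pair → M} (hz : ∀ p, z p ≠ 0) {j k l : Fin 3} (hjk : j ≠ k)
    (hjl : j ≠ l) {B : ℝ} (hB : N (zeta z j k l hjk hjl) ≤ B) : N (z ⟨(j, k), hjk⟩) ≤ B := by
  rw [map_zeta_of_map_mul hmul] at hB
  have hrest :
      1 ≤ N (z ⟨(j, l), hjl⟩) * N (z ⟨(k, j), hjk.symm⟩) ^ 2 * N (z ⟨(l, j), hjl.symm⟩) ^ 2 :=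
    one_le_mul_of_one_le_of_one_le (one_le_mul_of_one_le_of_one_le (hN _ (hz _))
      (one_le_pow₀ (hN _ (hz _)))) (one_le_pow₀ (hN _ (hz _)))
  exact (le_mul_of_one_le_right (by linarith [hN _ (hz ⟨(j, k), hjk⟩)]) hrest).trans hB

lemma map_zeta_nonneg {z : Pair → M}
    (hz : ∀ p, 0 ≤ N (z p)) (j k l : Fin 3) (hjk : j ≠ k) (hjl : j ≠ l) :
    0 ≤ N (zeta z j k l hjk hjl) := by
  rw [map_zeta_of_map_mul hmul]
  exact mul_nonneg (hz _)
    (mul_nonneg (mul_nonneg (hz _) (pow_nonneg (hz _) 2)) (pow_nonneg (hz _) 2))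

lemma zetaTerm_nonneg {B : ℝ} {z : Pair → M}
    (hz : ∀ p, 0 ≤ N (z p)) (j k l : Fin 3) (hjk : j ≠ k) (hjl : j ≠ l) :
    0 ≤ zetaTerm N B z j k l hjk hjl := by
  unfold zetaTerm
  split_ifs
  exacts [mul_nonneg (prod_nonneg fun p _ => inv_nonneg.mpr (hz p))
    (Real.rpow_nonneg (map_zeta_nonneg hmul hz _ _ _ _ _) _), le_rfl]

theorem tsum_le_sum_zetaTerm (hN : ∀ x, x ≠ 0 → 1 ≤ N x)
    {B : ℝ} {s : Finset M} (hs : ∀ x, x ≠ 0 → N x ≤ B → x ∈ s) (hs1 : ∀ x ∈ s, 1 ≤ N x) :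
    ∑' z : {z // ZetaBounded N B z}, zetaSummand N z
      ≤ ∑ z : Pair → s, (zetaTerm N B (fun p => z p) 0 1 2 (by decide) (by decide) +
        zetaTerm N B (fun p => z p) 1 2 0 (by decide) (by decide) +
        zetaTerm N B (fun p => z p) 2 0 1 (by decide) (by decide)) := by
  have hthird : ∀ a b : Fin 3, ∃ c, a ≠ c ∧ b ≠ c := by decide
  have hmem : ∀ (z : {z // ZetaBounded N B z}) (p : Pair), z.1 p ∈ s := by
    rintro ⟨z, hz0, hzB⟩ ⟨⟨a, b⟩, hab⟩
    obtain ⟨c, hac, hbc⟩ := hthird a b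
    exact hs _ (hz0 _) (map_le_of_map_zeta_le hmul hN hz0 hab hac (hzB a b c hab hac hbc))
  have hinj : Function.Injective fun (z : {z // ZetaBounded N B z}) (p : Pair) =>
      (⟨z.1 p, hmem z p⟩ : s) := fun z w h =>
    Subtype.ext (funext fun p => congrArg Subtype.val (congrFun h p))
  have : Finite {z // ZetaBounded N B z} := Finite.of_injective _ hinj
  refine (Summable.tsum_le_tsum_of_inj _ hinj (fun y _ => ?_) (fun z => ?_) .of_finite
    .of_finite).trans_eq (tsum_fintype _)
  · have hy : ∀ p, 0 ≤ N (y p) := fun p => by linarith [hs1 _ (y p).2]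
    exact add_nonneg (add_nonneg (zetaTerm_nonneg hmul hy _ _ _ _ _)
      (zetaTerm_nonneg hmul hy _ _ _ _ _)) (zetaTerm_nonneg hmul hy _ _ _ _ _)
  · obtain ⟨z, hz0, hzB⟩ := z
    have hz : ∀ p, 0 ≤ N (z p) := fun p => by linarith [hN _ (hz0 p)]
    simp only [zetaSummand, zetaTerm, if_pos (hzB 0 1 2 _ _ (by decide)),
      if_pos (hzB 1 2 0 _ _ (by decide)), if_pos (hzB 2 0 1 _ _ (by decide)), ← mul_add]
    have hζ : ∀ j k l hjk hjl, 0 ≤ N (zeta z j k l hjk hjl) ^ (1 / 6 : ℝ) := fun _ _ _ _ _ =>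
      Real.rpow_nonneg (map_zeta_nonneg hmul hz _ _ _ _ _) _
    refine mul_le_mul_of_nonneg_left ?_ (prod_nonneg fun p _ => inv_nonneg.mpr (hz p))
    have h0 := hζ 0 1 2 (by decide) (by decide)
    have h1 := hζ 1 2 0 (by decide) (by decide)
    have h2 := hζ 2 0 1 (by decide) (by decide)
    exact max_le (by linarith) (max_le (by linarith) (by linarith))

theorem sum_zetaTerm_le {s : Finset M} (hs : ∀ x ∈ s, 1 ≤ N x) {A : ℝ}
    (hA : ∀ X, 0 ≤ X → ∑ x ∈ s with N x ≤ X, N x ^ (-(5 / 6) : ℝ) ≤ A * X ^ (1 / 6 : ℝ))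
    {B : ℝ} (hB : 0 ≤ B) (j k l : Fin 3) (hjk : j ≠ k) (hjl : j ≠ l) (hkl : k ≠ l) :
    ∑ z : Pair → s, zetaTerm N B (fun p => z p) j k l hjk hjl
      ≤ A * B ^ (1 / 6 : ℝ) * (∑ x ∈ s, (N x)⁻¹) ^ 5 := by
  classical
  unfold zetaTerm
  have hpos : ∀ x : s, 0 < N x := fun x => by linarith [hs x x.2]
  rw [← sum_coe_sort s]
  refine Fintype.sum_le_mul_sum_pow_of_sum_funSplitAt_le ⟨(j, k), hjk⟩ _ _ _ fun w => ?_
  set D := N (w ⟨⟨(j, l), hjl⟩, by simp [hkl.symm]⟩) *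
    N (w ⟨⟨(k, j), hjk.symm⟩, by simp [hjk]⟩) ^ 2 *
    N (w ⟨⟨(l, j), hjl.symm⟩, by simp [hjl.symm]⟩) ^ 2
  set P := ∏ i, (N (w i))⁻¹
  have hD : 0 < D := mul_pos (mul_pos (hpos _) (pow_pos (hpos _) 2)) (pow_pos (hpos _) 2)
  have hP : 0 ≤ P := prod_nonneg fun i _ => (inv_pos.mpr (hpos _)).le
  have hsplit : ∀ x : s, ∀ p : Pair, ∀ hp : p ≠ ⟨(j, k), hjk⟩,
      (Equiv.funSplitAt ⟨(j, k), hjk⟩ s).symm (x, w) p = w ⟨p, hp⟩ := fun x p hp => by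
    simp [Equiv.funSplitAt_symm_apply, hp]
  calc _ = ∑ x : s, (if N x * D ≤ B then (N x)⁻¹ * (N x * D) ^ (1 / 6 : ℝ) else 0) * P := by
        refine Fintype.sum_congr _ _ fun x => ?_
        rw [map_zeta_of_map_mul hmul, Fintype.prod_eq_mul_prod_subtype_ne _ ⟨(j, k), hjk⟩]
        beta_reduce
        have hq : (Equiv.funSplitAt (⟨(j, k), hjk⟩ : Pair) s).symm (x, w) ⟨(j, k), hjk⟩ = x := by
          simp [Equiv.funSplitAt_symm_apply]
        rw [hq, hsplit x ⟨(j, l), hjl⟩ (by simp [hkl.symm]),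
          hsplit x ⟨(k, j), hjk.symm⟩ (by simp [hjk]),
          hsplit x ⟨(l, j), hjl.symm⟩ (by simp [hjl.symm]),
          Fintype.prod_congr _ (fun i => (N (w i))⁻¹) fun i => by rw [hsplit x i i.2]]
        split_ifs <;> ring
    _ = (∑ x ∈ s, if N x * D ≤ B then (N x)⁻¹ * (N x * D) ^ (1 / 6 : ℝ) else 0) * P := by
        rw [← sum_mul, ← sum_coe_sort s]
    _ ≤ A * B ^ (1 / 6 : ℝ) * P :=
        mul_le_mul_of_nonneg_right (sum_ite_inv_mul_rpow_le hs hA hB hD) hP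

theorem tsum_zetaSummand_le (hN : ∀ x, x ≠ 0 → 1 ≤ N x) {c : ℝ}
    (hcount : ∀ (t : Finset M) (X : ℝ), 0 ≤ X → (∀ x ∈ t, x ≠ 0 ∧ N x ≤ X) → (#t : ℝ) ≤ c * X)
    {B : ℝ} (hB : 2 ≤ B) :
    ∑' z : {z // ZetaBounded N B z}, zetaSummand N z
      ≤ 3 * (c * 2 ^ (5 / 6 : ℝ) / (1 - 2 ^ (5 / 6 : ℝ) / 2)) * (4 * c / Real.log 2) ^ 5
        * B ^ (1 / 6 : ℝ) * Real.log B ^ 5 := by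
  set A := c * 2 ^ (5 / 6 : ℝ) / (1 - 2 ^ (5 / 6 : ℝ) / 2)
  set s := (finite_setOf_ne_zero_le hcount B).toFinset
  have hmem : ∀ x, x ∈ s ↔ x ≠ 0 ∧ N x ≤ B := fun x => Set.Finite.mem_toFinset _
  have hs1 : ∀ x ∈ s, 1 ≤ N x := fun x hx => hN x ((hmem x).mp hx).1
  have hcount_s : ∀ X, 0 ≤ X → (#{x ∈ s | N x ≤ X} : ℝ) ≤ c * X := fun X hX =>
    hcount _ X hX fun x hx => ⟨((hmem x).mp (mem_filter.mp hx).1).1, (mem_filter.mp hx).2⟩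
  have hlog : ∑ x ∈ s, (N x)⁻¹ ≤ 4 * c / Real.log 2 * Real.log B := by
    simpa [filter_true_of_mem fun x hx => ((hmem x).mp hx).2] using
      sum_filter_le_inv_le_log hs1 hcount_s hB
  have hA : 0 ≤ A := div_nonneg (mul_nonneg (nonneg_of_card_filter_le hcount_s) (by positivity))
    (by linarith [two_rpow_lt_two (by norm_num : (5 / 6 : ℝ) < 1)])
  have hpow : ∀ X, 0 ≤ X → ∑ x ∈ s with N x ≤ X, N x ^ (-(5 / 6) : ℝ) ≤ A * X ^ (1 / 6 : ℝ) :=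
    fun X hX => by
      have := sum_filter_le_rpow_neg_le hs1 hcount_s (σ := 5 / 6) (by norm_num) (by norm_num) hX
      rwa [show (1 : ℝ) - 5 / 6 = 1 / 6 by norm_num] at this
  have hterm : ∀ j k l hjk hjl, k ≠ l → ∑ z : Pair → s, zetaTerm N B (fun p => z p) j k l hjk hjl
      ≤ A * B ^ (1 / 6 : ℝ) * (4 * c / Real.log 2 * Real.log B) ^ 5 := fun j k l hjk hjl hkl =>
    (sum_zetaTerm_le hmul hs1 hpow (by linarith) j k l hjk hjl hkl).trans (by
      gcongr
      exact sum_nonneg fun x hx => inv_nonneg.mpr (by linarith [hs1 x hx]))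
  calc _ ≤ _ := tsum_le_sum_zetaTerm hmul hN (fun x hx hxB => (hmem x).mpr ⟨hx, hxB⟩) hs1
    _ = _ := by rw [sum_add_distrib, sum_add_distrib]
    _ ≤ _ := add_le_add (add_le_add (hterm 0 1 2 _ _ (by decide)) (hterm 1 2 0 _ _ (by decide)))
          (hterm 2 0 1 _ _ (by decide))
    _ = _ := by ring

end Zeta

section ImaginaryQuadratic

variable {K : Type*} [Field K] (ι : K →+* ℂ) (himag : ∃ x : K, (ι x).im ≠ 0)

include himag in
lemma ne_conj_comp : ι ≠ (starRingEnd ℂ).comp ι := fun h => by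
  obtain ⟨y, hy⟩ := himag
  exact hy (Complex.conj_eq_iff_im.mp (DFunLike.congr_fun h y).symm)

variable [NumberField K] (hdeg : Module.finrank ℚ K = 2)
include hdeg himag

lemma univ_ringHom_eq_pair [DecidableEq (K →+* ℂ)] :
    (univ : Finset (K →+* ℂ)) = {ι, (starRingEnd ℂ).comp ι} := by
  refine (eq_of_subset_of_card_le (subset_univ _) ?_).symm
  rw [card_univ, Embeddings.card K ℂ, hdeg, card_pair (ne_conj_comp ι himag)]

theorem ratCast_norm_eq_sq_norm (x : K) : ((Algebra.norm ℚ x : ℚ) : ℝ) = ‖ι x‖ ^ 2 := by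
  classical
  have h : ((Algebra.norm ℚ x : ℚ) : ℂ) = ι x * starRingEnd ℂ (ι x) := by
    rw [← eq_ratCast (algebraMap ℚ ℂ), Algebra.norm_eq_prod_embeddings ℚ ℂ x,
      ← Fintype.prod_equiv (RingHom.equivRatAlgHom K ℂ) (fun φ => φ x) _ fun _ => rfl,
      univ_ringHom_eq_pair ι himag hdeg, prod_pair (ne_conj_comp ι himag)]
    rfl
  rw [Complex.mul_conj, Complex.normSq_eq_norm_sq] at h
  exact_mod_cast h

theorem one_le_sq_norm_of_ne_zero {x : 𝓞 K} (hx : x ≠ 0) : 1 ≤ ‖ι x‖ ^ 2 := by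
  have h : ((Algebra.norm ℤ x : ℤ) : ℝ) = ‖ι x‖ ^ 2 := by
    rw [← ratCast_norm_eq_sq_norm ι himag hdeg, ← Algebra.coe_norm_int]
    push_cast; rfl
  have hpos : 0 < ‖ι x‖ ^ 2 :=
    pow_pos (norm_pos_iff.mpr ((map_ne_zero ι).mpr (by exact_mod_cast hx))) 2
  rw [← h] at hpos ⊢
  exact_mod_cast (Int.cast_pos.mp hpos : (0 : ℤ) < _)

theorem one_le_dist_of_ne {x y : 𝓞 K} (hxy : x ≠ y) : 1 ≤ dist (ι x) (ι y) := by
  have h := one_le_sq_norm_of_ne_zero ι himag hdeg (sub_ne_zero.mpr hxy)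
  push_cast at h
  rw [map_sub, ← dist_eq_norm] at h
  nlinarith [dist_nonneg (x := ι x) (y := ι y)]

theorem card_le_of_sq_norm_le {t : Finset (𝓞 K)} {X : ℝ} (hX : 0 ≤ X)
    (ht : ∀ x ∈ t, x ≠ 0 ∧ ‖ι x‖ ^ 2 ≤ X) : (#t : ℝ) ≤ 9 * X := by
  classical
  rcases lt_or_ge X 1 with hX1 | hX1
  · rw [eq_empty_of_forall_notMem (s := t) fun x hx => by
      linarith [(ht x hx).2, one_le_sq_norm_of_ne_zero ι himag hdeg (ht x hx).1]]
    simpa using hX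
  have hinj : Set.InjOn (fun x : 𝓞 K => ι x) t := fun x _ y _ hxy => by
    by_contra hne
    have := one_le_dist_of_ne ι himag hdeg hne
    rw [show ι x = ι y from hxy, dist_self] at this
    linarith
  have hcard := Complex.card_le_of_one_le_dist (s := t.image fun x : 𝓞 K => ι x)
    (Real.sqrt_nonneg X) ?_ ?_
  · rw [card_image_of_injOn hinj] at hcard
    nlinarith [Real.sq_sqrt hX, Real.one_le_sqrt.mpr hX1]
  · simp only [coe_image]
    rintro _ ⟨x, -, rfl⟩ _ ⟨y, -, rfl⟩ hxy
    exact one_le_dist_of_ne ι himag hdeg fun h => hxy (by rw [h])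
  · simp only [mem_image]
    rintro _ ⟨x, hx, rfl⟩
    exact Real.le_sqrt_of_sq_le (ht x hx).2

end ImaginaryQuadratic

/-- estimate of the error term `R(B, r)` for `r = (1,…,1)`: for `B ≥ 2`,
`Σ_{z ∈ (𝓞_K∖{0})⁶ : ‖ζ_j‖ ≤ B} (∏_{j≠k} ‖z_{j,k}‖⁻¹)·max_j ‖ζ_j‖^{1/6} = O(B^{1/6}(log B)⁵)`. -/
theorem stmt14 (K : Type) [Field K] [NumberField K]
    (hdeg : Module.finrank ℚ K = 2)
    (ι : K →+* ℂ) (himag : ∃ x : K, (ι x).im ≠ 0)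
    (nrm : 𝓞 K → ℝ) (hnrm : ∀ x : 𝓞 K, nrm x = ‖ι (x : K)‖ ^ 2) :
    ∃ C > (0 : ℝ), ∀ B : ℝ, B ≥ 2 →
      (∑' z : {z : Pair → 𝓞 K // (∀ p, z p ≠ 0) ∧
            ∀ (j k l : Fin 3) (hjk : j ≠ k) (hjl : j ≠ l) (_ : k ≠ l),
              nrm (zeta (fun p => z p) j k l hjk hjl) ≤ B},
          (∏ p : Pair, (nrm ((z : Pair → 𝓞 K) p))⁻¹) *
            max (nrm (zeta (fun p => (z : Pair → 𝓞 K) p) 0 1 2 (by decide) (by decide))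
                  ^ ((1 : ℝ) / 6))
              (max (nrm (zeta (fun p => (z : Pair → 𝓞 K) p) 1 2 0 (by decide) (by decide))
                      ^ ((1 : ℝ) / 6))
                (nrm (zeta (fun p => (z : Pair → 𝓞 K) p) 2 0 1 (by decide) (by decide))
                      ^ ((1 : ℝ) / 6))))
        ≤ C * B ^ ((1 : ℝ) / 6) * Real.log B ^ 5 := by
  have hN : ∀ x, x ≠ 0 → 1 ≤ nrm x := fun x hx =>
    (hnrm x).symm ▸ one_le_sq_norm_of_ne_zero ι himag hdeg hx
  have hmul : ∀ x y, nrm (x * y) = nrm x * nrm y := fun x y => by simp [hnrm, mul_pow]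
  have hcount : ∀ (t : Finset (𝓞 K)) (X : ℝ), 0 ≤ X → (∀ x ∈ t, x ≠ 0 ∧ nrm x ≤ X) →
      (#t : ℝ) ≤ 9 * X := fun t X hX ht =>
    card_le_of_sq_norm_le ι himag hdeg hX fun x hx => hnrm x ▸ ht x hx
  have hA : 0 < 1 - (2 : ℝ) ^ (5 / 6 : ℝ) / 2 := by
    linarith [two_rpow_lt_two (by norm_num : (5 / 6 : ℝ) < 1)]
  exact ⟨_, mul_pos (mul_pos three_pos (div_pos (by positivity) hA))
    (pow_pos (div_pos (by norm_num) (Real.log_pos one_lt_two)) 5),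
    fun B hB => tsum_zetaSummand_le hmul hN hcount hB⟩
end
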